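/- arXiv:2307.13191 — 8 statements merged into one kernel-verified Lean document; each statement's English description precedes it below -/
import Mathlib

section
/- Let ℓ_1, …, ℓ_n be controls on a compact interval I, let C > 0 and p ≥ 1, and let x : I → ℝ^d be a continuous path satisfying ‖x(t) − x(s)‖ ≤ C Σ_{j=1}^n ℓ_j(s,t)^{1/p} for all s ≤ t in I. Then ⦀x⦀_{p-var,[s,t]} ≤ C n^{(p-1)/p} Σ_{j=1}^n ℓ_j(s,t)^{1/p} for all s ≤ t in I. -/
open Finset

lemma my_add_rpow (a b p : ℝ) (ha : 0 ≤ a) (hb : 0 ≤ b) (hp : 1 ≤ p) :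
    a ^ p + b ^ p ≤ (a + b) ^ p := by
  have h := NNReal.coe_le_coe.2 (NNReal.add_rpow_le_rpow_add a.toNNReal b.toNNReal hp)
  push_cast [NNReal.coe_rpow, Real.coe_toNNReal _ ha, Real.coe_toNNReal _ hb,
    Real.coe_toNNReal _ (add_nonneg ha hb)] at h
  exact h

lemma my_sum_rpow_le {ι : Type*} (s : Finset ι) (f : ι → ℝ) (hf : ∀ i ∈ s, 0 ≤ f i)
    {p : ℝ} (hp : 1 ≤ p) : ∑ i ∈ s, f i ^ p ≤ (∑ i ∈ s, f i) ^ p := by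
  induction s using Finset.cons_induction with
  | empty => simp [Real.zero_rpow (by positivity : p ≠ 0)]
  | cons a s has ih =>
    rw [Finset.sum_cons, Finset.sum_cons]
    have h1 : ∑ i ∈ s, f i ^ p ≤ (∑ i ∈ s, f i) ^ p :=
      ih fun i hi => hf i (Finset.mem_cons_of_mem hi)
    have h2 := my_add_rpow (f a) (∑ i ∈ s, f i) p (hf a (Finset.mem_cons_self a s))
      (Finset.sum_nonneg fun i hi => hf i (Finset.mem_cons_of_mem hi)) hp
    linarith

/-- The set of partition sums `Σ_i ‖x(t_{i+1}) - x(t_i)‖^p` over all finite partitions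
`s = u_0 < u_1 < ⋯ < u_k = t` of the interval `[s,t]`. -/
def pVarSums {d : ℕ} (p : ℝ) (x : ℝ → EuclideanSpace ℝ (Fin d)) (s t : ℝ) : Set ℝ :=
  { v | ∃ (k : ℕ) (u : ℕ → ℝ), 0 < k ∧ u 0 = s ∧ u k = t ∧
        (∀ i, i < k → u i < u (i + 1)) ∧
        v = ∑ i ∈ Finset.range k, ‖x (u (i + 1)) - x (u i)‖ ^ p }

/-- The `p`-variation seminorm `⦀x⦀_{p-var,[s,t]}`. -/
noncomputable def pVar {d : ℕ} (p : ℝ) (x : ℝ → EuclideanSpace ℝ (Fin d)) (s t : ℝ) : ℝ :=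
  sSup (pVarSums p x s t) ^ (1 / p)

theorem pVar_le_of_control_bound {d n : ℕ} (a b : ℝ) (hab : a ≤ b)
    (ℓ : Fin n → ℝ → ℝ → ℝ)
    (hcont : ∀ j, ContinuousOn (fun q : ℝ × ℝ => ℓ j q.1 q.2)
      {q : ℝ × ℝ | a ≤ q.1 ∧ q.1 ≤ q.2 ∧ q.2 ≤ b})
    (hnonneg : ∀ j, ∀ s t, a ≤ s → s ≤ t → t ≤ b → 0 ≤ ℓ j s t)
    (hzero : ∀ j, ∀ t, a ≤ t → t ≤ b → ℓ j t t = 0)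
    (hsuper : ∀ j, ∀ s t u, a ≤ s → s ≤ t → t ≤ u → u ≤ b → ℓ j s t + ℓ j t u ≤ ℓ j s u)
    (C p : ℝ) (hC : 0 < C) (hp : 1 ≤ p)
    (x : ℝ → EuclideanSpace ℝ (Fin d)) (hx : ContinuousOn x (Set.Icc a b))
    (hbound : ∀ s t, a ≤ s → s ≤ t → t ≤ b → ‖x t - x s‖ ≤ C * ∑ j, ℓ j s t ^ (1 / p)) :
    ∀ s t, a ≤ s → s ≤ t → t ≤ b →
      pVar p x s t ≤ C * (n : ℝ) ^ ((p - 1) / p) * ∑ j, ℓ j s t ^ (1 / p) := by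
  intro s t has hst htb
  have hp0 : (0 : ℝ) < p := lt_of_lt_of_le one_pos hp
  have hta : a ≤ t := le_trans has hst
  have hsb : s ≤ b := le_trans hst htb
  set S : ℝ := ∑ j, ℓ j s t ^ (1 / p) with hS
  have hSnn : 0 ≤ S := Finset.sum_nonneg fun j _ =>
    Real.rpow_nonneg (hnonneg j s t has hst htb) _
  set R : ℝ := C * (n : ℝ) ^ ((p - 1) / p) * S with hR
  have hRnn : 0 ≤ R := by positivity
  -- R ^ p = C ^ p * n ^ (p - 1) * S ^ p
  have hRp : R ^ p = C ^ p * (n : ℝ) ^ (p - 1) * S ^ p := by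
    rw [hR, Real.mul_rpow (by positivity) hSnn, Real.mul_rpow hC.le (by positivity),
      ← Real.rpow_mul (Nat.cast_nonneg n), div_mul_cancel₀ _ hp0.ne']
  -- Every partition sum is at most R ^ p
  have key : ∀ v ∈ pVarSums p x s t, v ≤ R ^ p := by
    rintro v ⟨k, u, hk, hu0, huk, hinc, rfl⟩
    -- monotonicity of u on [0, k]
    have hmono : ∀ m i : ℕ, i + m ≤ k → u i ≤ u (i + m) := by
      intro m
      induction m with
      | zero => intro i _; simp
      | succ m ih =>
        intro i h
        have h1 : u i ≤ u (i + m) := ih i (by omega)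
        have h2 : u (i + m) < u (i + m + 1) := hinc (i + m) (by omega)
        calc u i ≤ u (i + m) := h1
          _ ≤ u (i + m + 1) := h2.le
    have hle : ∀ i j : ℕ, i ≤ j → j ≤ k → u i ≤ u j := by
      intro i j hij hjk
      have := hmono (j - i) i (by omega)
      rwa [show i + (j - i) = j by omega] at this
    have hmem : ∀ i, i ≤ k → a ≤ u i ∧ u i ≤ b := by
      intro i hi
      constructor
      · calc a ≤ s := has
          _ = u 0 := hu0.symm
          _ ≤ u i := hle 0 i (Nat.zero_le i) hi
      · calc u i ≤ u k := hle i k hi le_rfl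
          _ = t := huk
          _ ≤ b := htb
    -- telescoping superadditivity
    have htel : ∀ j : Fin n, ∑ i ∈ Finset.range k, ℓ j (u i) (u (i + 1)) ≤ ℓ j s t := by
      intro j
      have gen : ∀ m, m ≤ k → ∑ i ∈ Finset.range m, ℓ j (u i) (u (i + 1)) ≤ ℓ j (u 0) (u m) := by
        intro m
        induction m with
        | zero =>
          intro _
          simp [hzero j (u 0) (hmem 0 (Nat.zero_le k)).1 (hmem 0 (Nat.zero_le k)).2]
        | succ m ih =>
          intro hmk
          rw [Finset.sum_range_succ]
          have h1 := ih (by omega)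
          have h2 := hsuper j (u 0) (u m) (u (m + 1)) (hmem 0 (Nat.zero_le k)).1
            (hle 0 m (Nat.zero_le m) (by omega)) (hinc m (by omega)).le
            (hmem (m + 1) (by omega)).2
          linarith
      have := gen k le_rfl
      rwa [hu0, huk] at this
    -- bound each increment
    have hterm : ∀ i ∈ Finset.range k,
        ‖x (u (i + 1)) - x (u i)‖ ^ p ≤
          C ^ p * (n : ℝ) ^ (p - 1) * ∑ j, ℓ j (u i) (u (i + 1)) := by
      intro i hi
      rw [Finset.mem_range] at hi
      have hia := hmem i (by omega)
      have hib := hmem (i + 1) (by omega)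
      have hui : u i ≤ u (i + 1) := (hinc i hi).le
      have hb1 := hbound (u i) (u (i + 1)) hia.1 hui hib.2
      have hs_nn : (0 : ℝ) ≤ ∑ j, ℓ j (u i) (u (i + 1)) ^ (1 / p) :=
        Finset.sum_nonneg fun j _ => Real.rpow_nonneg (hnonneg j _ _ hia.1 hui hib.2) _
      have step1 : ‖x (u (i + 1)) - x (u i)‖ ^ p ≤
          (C * ∑ j, ℓ j (u i) (u (i + 1)) ^ (1 / p)) ^ p :=
        Real.rpow_le_rpow (norm_nonneg _) hb1 hp0.le
      have step2 : (C * ∑ j, ℓ j (u i) (u (i + 1)) ^ (1 / p)) ^ p =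
          C ^ p * (∑ j, ℓ j (u i) (u (i + 1)) ^ (1 / p)) ^ p :=
        Real.mul_rpow hC.le hs_nn
      have step3 : (∑ j, ℓ j (u i) (u (i + 1)) ^ (1 / p)) ^ p ≤
          (n : ℝ) ^ (p - 1) * ∑ j, (ℓ j (u i) (u (i + 1)) ^ (1 / p)) ^ p := by
        have := Real.rpow_sum_le_const_mul_sum_rpow_of_nonneg
          (s := (Finset.univ : Finset (Fin n)))
          (f := fun j => ℓ j (u i) (u (i + 1)) ^ (1 / p)) hp
          (fun j _ => Real.rpow_nonneg (hnonneg j _ _ hia.1 hui hib.2) _)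
        simpa using this
      have step4 : ∀ j : Fin n, (ℓ j (u i) (u (i + 1)) ^ (1 / p)) ^ p = ℓ j (u i) (u (i + 1)) := by
        intro j
        rw [← Real.rpow_mul (hnonneg j _ _ hia.1 hui hib.2)]
        rw [one_div_mul_cancel hp0.ne', Real.rpow_one]
      rw [Finset.sum_congr rfl fun j _ => step4 j] at step3
      calc ‖x (u (i + 1)) - x (u i)‖ ^ p ≤
            C ^ p * (∑ j, ℓ j (u i) (u (i + 1)) ^ (1 / p)) ^ p := by rw [← step2]; exact step1
        _ ≤ C ^ p * ((n : ℝ) ^ (p - 1) * ∑ j, ℓ j (u i) (u (i + 1))) :=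
            mul_le_mul_of_nonneg_left step3 (Real.rpow_nonneg hC.le _)
        _ = C ^ p * (n : ℝ) ^ (p - 1) * ∑ j, ℓ j (u i) (u (i + 1)) := by ring
    -- sum up
    have hsum : ∑ i ∈ Finset.range k, ‖x (u (i + 1)) - x (u i)‖ ^ p ≤
        C ^ p * (n : ℝ) ^ (p - 1) * ∑ j, ℓ j s t := by
      calc ∑ i ∈ Finset.range k, ‖x (u (i + 1)) - x (u i)‖ ^ p
          ≤ ∑ i ∈ Finset.range k, C ^ p * (n : ℝ) ^ (p - 1) * ∑ j, ℓ j (u i) (u (i + 1)) :=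
            Finset.sum_le_sum hterm
        _ = C ^ p * (n : ℝ) ^ (p - 1) * ∑ i ∈ Finset.range k, ∑ j, ℓ j (u i) (u (i + 1)) := by
            rw [Finset.mul_sum]
        _ = C ^ p * (n : ℝ) ^ (p - 1) * ∑ j, ∑ i ∈ Finset.range k, ℓ j (u i) (u (i + 1)) := by
            rw [Finset.sum_comm]
        _ ≤ C ^ p * (n : ℝ) ^ (p - 1) * ∑ j, ℓ j s t := by
            apply mul_le_mul_of_nonneg_left (Finset.sum_le_sum fun j _ => htel j)
            positivity
    have hSp : ∑ j, ℓ j s t ≤ S ^ p := by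
      have heq : ∀ j : Fin n, ℓ j s t = (ℓ j s t ^ (1 / p)) ^ p := by
        intro j
        rw [← Real.rpow_mul (hnonneg j s t has hst htb), one_div_mul_cancel hp0.ne',
          Real.rpow_one]
      calc ∑ j, ℓ j s t = ∑ j, (ℓ j s t ^ (1 / p)) ^ p := Finset.sum_congr rfl fun j _ => heq j
        _ ≤ (∑ j, ℓ j s t ^ (1 / p)) ^ p := my_sum_rpow_le _ _
            (fun j _ => Real.rpow_nonneg (hnonneg j s t has hst htb) _) hp
    calc ∑ i ∈ Finset.range k, ‖x (u (i + 1)) - x (u i)‖ ^ p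
        ≤ C ^ p * (n : ℝ) ^ (p - 1) * ∑ j, ℓ j s t := hsum
      _ ≤ C ^ p * (n : ℝ) ^ (p - 1) * S ^ p := by
          apply mul_le_mul_of_nonneg_left hSp; positivity
      _ = R ^ p := hRp.symm
  have hsup : sSup (pVarSums p x s t) ≤ R ^ p :=
    Real.sSup_le key (Real.rpow_nonneg hRnn p)
  have hsup_nn : 0 ≤ sSup (pVarSums p x s t) := by
    apply Real.sSup_nonneg
    rintro v ⟨k, u, hk, hu0, huk, hinc, rfl⟩
    exact Finset.sum_nonneg fun i _ => Real.rpow_nonneg (norm_nonneg _) _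
  rw [pVar]
  calc sSup (pVarSums p x s t) ^ (1 / p) ≤ (R ^ p) ^ (1 / p) :=
        Real.rpow_le_rpow hsup_nn hsup (by positivity)
    _ = R := by
        rw [← Real.rpow_mul hRnn, mul_one_div, div_self hp0.ne', Real.rpow_one]
end

section
/- Let ℓ_1, …, ℓ_n be controls on a compact interval I, let C > 0 and q ≥ 1, and let R be a continuous function of two variables (s,t) with s ≤ t in I, taking values in ℝ^d, satisfying ‖R(s,t)‖ ≤ C Σ_{j=1}^n ℓ_j(s,t)^{1/q} for all s ≤ t in I. Then ⦀R⦀_{q-var,[s,t]²} ≤ C n^{(q-1)/q} Σ_{j=1}^n ℓ_j(s,t)^{1/q} for all s ≤ t in I. -/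
open Finset

/-- The set of partition sums `Σ_i ‖R(t_i, t_{i+1})‖^q` over all finite partitions
`s = u_0 < u_1 < ⋯ < u_k = t` of the interval `[s,t]`, for a two-parameter function `R`. -/
def pVarSums2 {d : ℕ} (q : ℝ) (R : ℝ → ℝ → EuclideanSpace ℝ (Fin d)) (s t : ℝ) : Set ℝ :=
  { v | ∃ (k : ℕ) (u : ℕ → ℝ), 0 < k ∧ u 0 = s ∧ u k = t ∧
        (∀ i, i < k → u i < u (i + 1)) ∧
        v = ∑ i ∈ Finset.range k, ‖R (u i) (u (i + 1))‖ ^ q }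

/-- The `q`-variation `⦀R⦀_{q-var,[s,t]²}` of a two-parameter function `R`. -/
noncomputable def pVar2 {d : ℕ} (q : ℝ) (R : ℝ → ℝ → EuclideanSpace ℝ (Fin d)) (s t : ℝ) : ℝ :=
  sSup (pVarSums2 q R s t) ^ (1 / q)

theorem pVar2_le_of_control_bound {d n : ℕ} (a b : ℝ) (hab : a ≤ b)
    (ℓ : Fin n → ℝ → ℝ → ℝ)
    (hcont : ∀ j, ContinuousOn (fun q : ℝ × ℝ => ℓ j q.1 q.2)
      {q : ℝ × ℝ | a ≤ q.1 ∧ q.1 ≤ q.2 ∧ q.2 ≤ b})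
    (hnonneg : ∀ j, ∀ s t, a ≤ s → s ≤ t → t ≤ b → 0 ≤ ℓ j s t)
    (hzero : ∀ j, ∀ t, a ≤ t → t ≤ b → ℓ j t t = 0)
    (hsuper : ∀ j, ∀ s t u, a ≤ s → s ≤ t → t ≤ u → u ≤ b → ℓ j s t + ℓ j t u ≤ ℓ j s u)
    (C q : ℝ) (hC : 0 < C) (hq : 1 ≤ q)
    (R : ℝ → ℝ → EuclideanSpace ℝ (Fin d))
    (hR : ContinuousOn (fun z : ℝ × ℝ => R z.1 z.2)
      {z : ℝ × ℝ | a ≤ z.1 ∧ z.1 ≤ z.2 ∧ z.2 ≤ b})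
    (hbound : ∀ s t, a ≤ s → s ≤ t → t ≤ b → ‖R s t‖ ≤ C * ∑ j, ℓ j s t ^ (1 / q)) :
    ∀ s t, a ≤ s → s ≤ t → t ≤ b →
      pVar2 q R s t ≤ C * (n : ℝ) ^ ((q - 1) / q) * ∑ j, ℓ j s t ^ (1 / q) := by
  intro s t has hst htb
  have hq0 : 0 < q := lt_of_lt_of_le one_pos hq
  have hqne : q ≠ 0 := ne_of_gt hq0
  have hp0 : (0:ℝ) < 1 / q := by positivity
  have hp1 : 1 / q ≤ 1 := by
    rw [div_le_one hq0]; exact hq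
  set S : ℝ := ∑ j, ℓ j s t ^ (1 / q) with hS
  have hS0 : 0 ≤ S := Finset.sum_nonneg fun j _ =>
    Real.rpow_nonneg (hnonneg j s t has hst htb) _
  set M : ℝ := C * (n : ℝ) ^ ((q - 1) / q) * S with hM
  have hM0 : 0 ≤ M := by positivity
  -- key : every partition sum is ≤ M ^ q
  have key : ∀ v ∈ pVarSums2 q R s t, v ≤ M ^ q := by
    rintro v ⟨k, u, hk, hu0, huk, hmono, rfl⟩
    -- monotonicity of u on [0, k]
    have humono : ∀ m, m ≤ k → ∀ i, i ≤ m → u i ≤ u m := by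
      intro m hm
      induction m with
      | zero =>
          intro i hi
          have : i = 0 := Nat.le_zero.mp hi
          simp [this]
      | succ m ih =>
          intro i hi
          rcases Nat.lt_or_ge i (m+1) with h | h
          · exact le_trans (ih (le_of_lt (Nat.lt_of_lt_of_le (Nat.lt_succ_self m) hm))
              i (Nat.lt_succ_iff.mp h)) (le_of_lt (hmono m (Nat.lt_of_lt_of_le (Nat.lt_succ_self m) hm)))
          · have : i = m + 1 := le_antisymm hi h
            simp [this]
    have hua : ∀ i, i ≤ k → a ≤ u i := by
      intro i hi
      have : u 0 ≤ u i := by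
        rcases Nat.eq_zero_or_pos i with h | h
        · simp [h]
        · exact humono i hi 0 (Nat.zero_le _)
      rw [hu0] at this; linarith
    have hub : ∀ i, i ≤ k → u i ≤ b := by
      intro i hi
      have : u i ≤ u k := humono k le_rfl i hi
      rw [huk] at this; linarith
    -- per-term bound
    have hterm : ∀ i, i < k →
        ‖R (u i) (u (i+1))‖ ^ q ≤ C ^ q * (n:ℝ) ^ (q-1) * ∑ j, ℓ j (u i) (u (i+1)) := by
      intro i hi
      have hai : a ≤ u i := hua i (le_of_lt hi)
      have hii : u i ≤ u (i+1) := le_of_lt (hmono i hi)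
      have hib : u (i+1) ≤ b := hub (i+1) hi
      have h1 : ‖R (u i) (u (i+1))‖ ^ q ≤
          (C * ∑ j, ℓ j (u i) (u (i+1)) ^ (1/q)) ^ q :=
        Real.rpow_le_rpow (norm_nonneg _) (hbound _ _ hai hii hib) (le_of_lt hq0)
      have hsum0 : (0:ℝ) ≤ ∑ j, ℓ j (u i) (u (i+1)) ^ (1/q) :=
        Finset.sum_nonneg fun j _ => Real.rpow_nonneg (hnonneg j _ _ hai hii hib) _
      have h2 : (C * ∑ j, ℓ j (u i) (u (i+1)) ^ (1/q)) ^ q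
          = C ^ q * (∑ j, ℓ j (u i) (u (i+1)) ^ (1/q)) ^ q :=
        Real.mul_rpow (le_of_lt hC) hsum0
      have h3 : (∑ j, ℓ j (u i) (u (i+1)) ^ (1/q)) ^ q
          ≤ (n:ℝ) ^ (q-1) * ∑ j, (ℓ j (u i) (u (i+1)) ^ (1/q)) ^ q := by
        have := Real.rpow_sum_le_const_mul_sum_rpow_of_nonneg (s := Finset.univ)
          (f := fun j => ℓ j (u i) (u (i+1)) ^ (1/q)) (p := q) hq
          (fun j _ => Real.rpow_nonneg (hnonneg j _ _ hai hii hib) _)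
        simpa using this
      have h4 : ∀ j : Fin n, (ℓ j (u i) (u (i+1)) ^ (1/q)) ^ q = ℓ j (u i) (u (i+1)) := by
        intro j
        rw [one_div, Real.rpow_inv_rpow (hnonneg j _ _ hai hii hib) hqne]
      calc ‖R (u i) (u (i+1))‖ ^ q
          ≤ (C * ∑ j, ℓ j (u i) (u (i+1)) ^ (1/q)) ^ q := h1
        _ = C ^ q * (∑ j, ℓ j (u i) (u (i+1)) ^ (1/q)) ^ q := h2
        _ ≤ C ^ q * ((n:ℝ) ^ (q-1) * ∑ j, (ℓ j (u i) (u (i+1)) ^ (1/q)) ^ q) := by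
            apply mul_le_mul_of_nonneg_left h3
            exact Real.rpow_nonneg (le_of_lt hC) _
        _ = C ^ q * (n:ℝ) ^ (q-1) * ∑ j, ℓ j (u i) (u (i+1)) := by
            rw [mul_assoc]; congr 1; congr 1
            exact Finset.sum_congr rfl fun j _ => h4 j
    -- telescoping / superadditivity
    have htel : ∀ j : Fin n, ∀ m, m ≤ k →
        ∑ i ∈ Finset.range m, ℓ j (u i) (u (i+1)) ≤ ℓ j (u 0) (u m) := by
      intro j m
      induction m with
      | zero => intro _; simp [hnonneg j (u 0) (u 0) (hua 0 (Nat.zero_le _)) le_rfl (hub 0 (Nat.zero_le _))]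
      | succ m ih =>
          intro hm
          have hm' : m ≤ k := le_of_lt (Nat.lt_of_lt_of_le (Nat.lt_succ_self m) hm)
          rw [Finset.sum_range_succ]
          have h5 : ℓ j (u 0) (u m) + ℓ j (u m) (u (m+1)) ≤ ℓ j (u 0) (u (m+1)) :=
            hsuper j (u 0) (u m) (u (m+1)) (hua 0 (Nat.zero_le _))
              (humono m hm' 0 (Nat.zero_le _)) (le_of_lt (hmono m hm)) (hub (m+1) hm)
          linarith [ih hm', h5]
    have htel' : ∀ j : Fin n,
        ∑ i ∈ Finset.range k, ℓ j (u i) (u (i+1)) ≤ ℓ j s t := by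
      intro j
      have := htel j k le_rfl
      rwa [hu0, huk] at this
    -- combine
    have hsum : ∑ i ∈ Finset.range k, ‖R (u i) (u (i+1))‖ ^ q
        ≤ C ^ q * (n:ℝ) ^ (q-1) * ∑ j, ℓ j s t := by
      calc ∑ i ∈ Finset.range k, ‖R (u i) (u (i+1))‖ ^ q
          ≤ ∑ i ∈ Finset.range k, (C ^ q * (n:ℝ) ^ (q-1) * ∑ j, ℓ j (u i) (u (i+1))) :=
            Finset.sum_le_sum fun i hi => hterm i (Finset.mem_range.mp hi)
        _ = C ^ q * (n:ℝ) ^ (q-1) * ∑ i ∈ Finset.range k, ∑ j, ℓ j (u i) (u (i+1)) := by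
            rw [Finset.mul_sum]
        _ = C ^ q * (n:ℝ) ^ (q-1) * ∑ j, ∑ i ∈ Finset.range k, ℓ j (u i) (u (i+1)) := by
            rw [Finset.sum_comm]
        _ ≤ C ^ q * (n:ℝ) ^ (q-1) * ∑ j, ℓ j s t := by
            apply mul_le_mul_of_nonneg_left (Finset.sum_le_sum fun j _ => htel' j)
            positivity
    -- now show C^q * n^{q-1} * Σ ℓⱼ s t ≤ M ^ q
    have hℓS : ∑ j, ℓ j s t ≤ S ^ q := by
      -- (Σ ℓⱼ)^{1/q} ≤ Σ ℓⱼ^{1/q} = S, so Σ ℓⱼ ≤ S^q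
      have hsub : ((∑ j, ℓ j s t) : ℝ) ^ (1/q) ≤ S := by
        rw [hS]
        -- subadditivity of x ↦ x^{1/q}
        have : ∀ (m : ℕ) (f : Fin m → ℝ), (∀ j, 0 ≤ f j) →
            (∑ j, f j) ^ (1/q) ≤ ∑ j, f j ^ (1/q) := by
          intro m
          induction m with
          | zero => intro f _; simp [one_div, Real.zero_rpow (inv_ne_zero hqne)]
          | succ m ih =>
              intro f hf
              rw [Fin.sum_univ_succ, Fin.sum_univ_succ]
              have h20 : (0:ℝ) ≤ ∑ j : Fin m, f j.succ :=
                Finset.sum_nonneg fun j _ => hf _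
              calc (f 0 + ∑ j : Fin m, f j.succ) ^ (1/q)
                  ≤ f 0 ^ (1/q) + (∑ j : Fin m, f j.succ) ^ (1/q) := by
                    have := NNReal.rpow_add_le_add_rpow
                      (⟨f 0, hf 0⟩ : NNReal) (⟨_, h20⟩ : NNReal) (le_of_lt hp0) hp1
                    exact_mod_cast this
                _ ≤ f 0 ^ (1/q) + ∑ j : Fin m, f j.succ ^ (1/q) := by
                    linarith [ih (fun j => f j.succ) (fun j => hf _)]
        exact this n (fun j => ℓ j s t) (fun j => hnonneg j s t has hst htb)
      have h6 : (((∑ j, ℓ j s t) : ℝ) ^ (1/q)) ^ q ≤ S ^ q :=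
        Real.rpow_le_rpow (Real.rpow_nonneg
          (Finset.sum_nonneg fun j _ => hnonneg j s t has hst htb) _) hsub (le_of_lt hq0)
      rwa [one_div, Real.rpow_inv_rpow
        (Finset.sum_nonneg fun j _ => hnonneg j s t has hst htb) hqne] at h6
    have hMq : M ^ q = C ^ q * (n:ℝ) ^ (q-1) * S ^ q := by
      rw [hM, Real.mul_rpow (by positivity) hS0,
        Real.mul_rpow (le_of_lt hC) (by positivity),
        ← Real.rpow_mul (Nat.cast_nonneg n), div_mul_cancel₀ _ hqne]
    calc ∑ i ∈ Finset.range k, ‖R (u i) (u (i+1))‖ ^ q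
        ≤ C ^ q * (n:ℝ) ^ (q-1) * ∑ j, ℓ j s t := hsum
      _ ≤ C ^ q * (n:ℝ) ^ (q-1) * S ^ q := by
          apply mul_le_mul_of_nonneg_left hℓS; positivity
      _ = M ^ q := hMq.symm
  -- conclude
  have hsup_le : sSup (pVarSums2 q R s t) ≤ M ^ q :=
    Real.sSup_le key (Real.rpow_nonneg hM0 q)
  have hsup_nonneg : 0 ≤ sSup (pVarSums2 q R s t) :=
    Real.sSup_nonneg fun v hv => by
      obtain ⟨k, u, hk, hu0, huk, hmono, rfl⟩ := hv
      exact Finset.sum_nonneg fun i _ => Real.rpow_nonneg (norm_nonneg _) _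
  have : sSup (pVarSums2 q R s t) ^ (1/q) ≤ (M ^ q) ^ (1/q) :=
    Real.rpow_le_rpow hsup_nonneg hsup_le (le_of_lt hp0)
  rw [one_div, Real.rpow_rpow_inv hM0 hqne] at this
  unfold pVar2
  rw [one_div]
  exact this
end

section
/- Let A be a real m×m matrix such that ⟨Ay, y⟩ ≥ λ_A ‖y‖² for all y ∈ ℝ^m, where λ_A > 0, and let ω : ℝ → ℝ^m be continuous with sublinear growth. If moreover ω is η-Hölder continuous on every compact interval for some η ∈ (0,1), then the function u ↦ Z(θ_u ω) is η-Hölder continuous on every compact interval [T_1, T_2] with T_1 < T_2. -/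
/-!
Let `B` be the operator of `A`. Coercivity makes `‖exp (r • B)‖ ≤ e^{λ r}` for `r ≤ 0`, and
`B ∫_{-∞}^0 e^{rB} c dr = c`, so `Z(θ_u ω) = ω u - B (G u)` with
`G u = ∫_{-∞}^0 e^{rB} ω(r + u) dr` (integrable since `ω` grows at most linearly).
The substitution `v = r + u` gives `G u = e^{-uB} ∫_{-∞}^u e^{vB} ω v dv`, so `G' = ω - B G`:
`G` is `C¹`, hence `B G` is Lipschitz on compact intervals, and `Z` inherits the
`η`-Hölder continuity of `ω` because `η ≤ 1`.
-/

open scoped RealInnerProductSpace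
open MeasureTheory Filter

/-- The stationary Ornstein–Uhlenbeck process:
`Z(θ_u ω) = -A ∫_{-∞}^0 exp(rA) (ω(r+u) - ω(u)) dr`. -/
noncomputable def OUstat {m : ℕ} (A : Matrix (Fin m) (Fin m) ℝ)
    (ω : ℝ → EuclideanSpace ℝ (Fin m)) (u : ℝ) : EuclideanSpace ℝ (Fin m) :=
  -(Matrix.toEuclideanLin A (∫ r in Set.Iic (0 : ℝ),
      Matrix.toEuclideanLin (NormedSpace.exp (r • A)) (ω (r + u) - ω u)))

open NormedSpace Set

section Holder

variable {F : Type*} [NormedAddCommGroup F]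

def HolderOnIcc (η T₁ T₂ : ℝ) (f : ℝ → F) : Prop :=
  ∃ C : ℝ, ∀ s ∈ Icc T₁ T₂, ∀ t ∈ Icc T₁ T₂, s ≤ t → ‖f t - f s‖ ≤ C * (t - s) ^ η

lemma HolderOnIcc.sub {η T₁ T₂ : ℝ} {f g : ℝ → F} (hf : HolderOnIcc η T₁ T₂ f)
    (hg : HolderOnIcc η T₁ T₂ g) : HolderOnIcc η T₁ T₂ (fun u ↦ f u - g u) := by
  obtain ⟨C, hC⟩ := hf
  obtain ⟨D, hD⟩ := hg
  refine ⟨C + D, fun s hs t ht hst ↦ ?_⟩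
  calc ‖f t - g t - (f s - g s)‖ = ‖(f t - f s) - (g t - g s)‖ := by abel_nf
    _ ≤ ‖f t - f s‖ + ‖g t - g s‖ := norm_sub_le _ _
    _ ≤ C * (t - s) ^ η + D * (t - s) ^ η := add_le_add (hC s hs t ht hst) (hD s hs t ht hst)
    _ = (C + D) * (t - s) ^ η := by ring

lemma LipschitzOnWith.holderOnIcc {η T₁ T₂ : ℝ} {f : ℝ → F} {K : NNReal}
    (hf : LipschitzOnWith K f (Icc T₁ T₂)) (hη : η ≤ 1) : HolderOnIcc η T₁ T₂ f := by
  refine ⟨K * (T₂ - T₁) ^ (1 - η), fun s hs t ht hst ↦ ?_⟩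
  have hδ : 0 ≤ t - s := sub_nonneg.2 hst
  calc ‖f t - f s‖ ≤ K * (t - s) := by
        simpa [dist_eq_norm, abs_of_nonneg hδ] using hf.dist_le_mul t ht s hs
    _ = K * ((t - s) ^ (1 - η) * (t - s) ^ η) := by
        rw [← Real.rpow_add' hδ (by simp), sub_add_cancel, Real.rpow_one]
    _ ≤ K * ((T₂ - T₁) ^ (1 - η) * (t - s) ^ η) := by
        have hle : t - s ≤ T₂ - T₁ := by linarith [hs.1, ht.2]
        gcongr
    _ = K * (T₂ - T₁) ^ (1 - η) * (t - s) ^ η := by ring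

end Holder

lemma exists_norm_le_add_abs_of_sublinear {F : Type*} [NormedAddCommGroup F] {f : ℝ → F}
    (hf : Continuous f) (htop : Tendsto (fun t ↦ ‖f t‖ / |t|) atTop (nhds 0))
    (hbot : Tendsto (fun t ↦ ‖f t‖ / |t|) atBot (nhds 0)) :
    ∃ K : ℝ, ∀ t, ‖f t‖ ≤ K + |t| := by
  have hfar : ∀ᶠ t in cocompact ℝ, ‖f t‖ ≤ |t| := by
    have key : ∀ t : ℝ, t ≠ 0 → ‖f t‖ / |t| ≤ 1 → ‖f t‖ ≤ |t| := fun t ht h ↦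
      (div_le_one (abs_pos.2 ht)).1 h
    rw [cocompact_eq_atBot_atTop, eventually_sup]
    exact ⟨((eventually_lt_atBot 0).and (hbot.eventually (eventually_le_nhds one_pos))).mono
        fun t h ↦ key t h.1.ne h.2,
      ((eventually_gt_atTop 0).and (htop.eventually (eventually_le_nhds one_pos))).mono
        fun t h ↦ key t h.1.ne' h.2⟩
  obtain ⟨S, hS, hSf⟩ := mem_cocompact.1 hfar
  obtain ⟨M, hM⟩ := hS.exists_bound_of_continuousOn hf.continuousOn
  refine ⟨max M 0, fun t ↦ ?_⟩
  by_cases ht : t ∈ S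
  · linarith [hM t ht, le_max_left M 0, abs_nonneg t]
  · linarith [show ‖f t‖ ≤ |t| from hSf ht, le_max_right M 0]

lemma integrableOn_Iic_abs_mul_exp {c : ℝ} (hc : 0 < c) :
    IntegrableOn (fun v ↦ |v| * Real.exp (c * v)) (Iic 0) := by
  refine ((integrableOn_exp_mul_Iic (half_pos hc) 0).const_mul (2 / c)).mono'
    (by fun_prop : Continuous fun v ↦ |v| * Real.exp (c * v)).aestronglyMeasurable ?_
  rw [ae_restrict_iff' measurableSet_Iic]
  refine ae_of_all _ fun v (hv : v ≤ 0) ↦ ?_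
  set a := Real.exp (c / 2 * v)
  have ha : 0 < a := Real.exp_pos _
  have hinv : a * Real.exp (-(c / 2 * v)) = 1 := by
    rw [← Real.exp_add, add_neg_cancel, Real.exp_zero]
  -- `x + 1 ≤ exp x` at `x = -c v / 2`, multiplied by `exp (c v / 2)`
  have hva : -v * a ≤ 2 / c := by
    have h := mul_le_mul_of_nonneg_left (Real.add_one_le_exp (-(c / 2 * v))) ha.le
    rw [hinv] at h
    rw [le_div_iff₀ hc]
    nlinarith
  have hsq : Real.exp (c * v) = a * a := by
    rw [← Real.exp_add]; ring_nf
  rw [Real.norm_of_nonneg (by positivity), abs_of_nonpos hv, hsq, ← mul_assoc]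
  exact mul_le_mul_of_nonneg_right hva ha.le

section OperatorExponential

variable {E : Type*} [NormedAddCommGroup E] [NormedSpace ℝ E] [CompleteSpace E]

lemma exp_add_smul (B : E →L[ℝ] E) (s t : ℝ) :
    exp ((s + t) • B) = exp (s • B) * exp (t • B) := by
  let +nondep : NormedAlgebra ℚ (E →L[ℝ] E) := .restrictScalars ℚ ℝ _
  rw [add_smul]
  exact exp_add_of_commute (((Commute.refl B).smul_left s).smul_right t)

lemma exp_neg_smul_apply_exp_smul_apply (B : E →L[ℝ] E) (t : ℝ) (y : E) :
    exp ((-t) • B) (exp (t • B) y) = y := by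
  rw [← mul_apply_eq_comp, ← exp_add_smul, neg_add_cancel, zero_smul, exp_zero]
  rfl

lemma hasDerivAt_exp_smul_apply (B : E →L[ℝ] E) (y : E) (t : ℝ) :
    HasDerivAt (fun t : ℝ ↦ exp (t • B) y) (B (exp (t • B) y)) t := by
  simpa using (hasDerivAt_exp_smul_const' B t).clm_apply (hasDerivAt_const t y)

lemma continuous_exp_smul (B : E →L[ℝ] E) : Continuous fun t : ℝ ↦ exp (t • B) :=
  continuous_iff_continuousAt.2 fun t ↦ (hasDerivAt_exp_smul_const' B t).continuousAt

end OperatorExponential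

lemma norm_exp_smul_le_of_coercive {E : Type*} [NormedAddCommGroup E] [InnerProductSpace ℝ E]
    [CompleteSpace E] {B : E →L[ℝ] E} {lam : ℝ} (hB : ∀ y, lam * ‖y‖ ^ 2 ≤ ⟪B y, y⟫)
    {r : ℝ} (hr : r ≤ 0) : ‖exp (r • B)‖ ≤ Real.exp (lam * r) := by
  refine ContinuousLinearMap.opNorm_le_bound _ (Real.exp_pos _).le fun y ↦ ?_
  set f : ℝ → E := fun t ↦ exp (t • B) y
  have hderiv : ∀ t, HasDerivAt (fun t ↦ Real.exp (-(2 * lam) * t) * ‖f t‖ ^ 2)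
      (Real.exp (-(2 * lam) * t) * (2 * (⟪B (f t), f t⟫ - lam * ‖f t‖ ^ 2))) t := by
    intro t
    refine ((((hasDerivAt_id t).const_mul (-(2 * lam))).exp).mul
      (hasDerivAt_exp_smul_apply B y t).norm_sq).congr_deriv ?_
    rw [real_inner_comm]
    simp only [id, mul_one]
    ring
  have hmono := monotone_of_hasDerivAt_nonneg hderiv fun t ↦
    mul_nonneg (Real.exp_pos _).le (by linarith [hB (f t)])
  have h := hmono hr
  simp only [f, mul_zero, Real.exp_zero, zero_smul, exp_zero, one_mul, one_apply_eq_self] at h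
  rw [← pow_le_pow_iff_left₀ (norm_nonneg _) (by positivity) two_ne_zero]
  calc ‖exp (r • B) y‖ ^ 2
      = Real.exp (2 * lam * r) * (Real.exp (-(2 * lam) * r) * ‖exp (r • B) y‖ ^ 2) := by
        rw [← mul_assoc, ← Real.exp_add]; ring_nf; simp
    _ ≤ Real.exp (2 * lam * r) * ‖y‖ ^ 2 := by gcongr
    _ = (Real.exp (lam * r) * ‖y‖) ^ 2 := by
        rw [mul_pow, ← Real.exp_nat_mul]; ring_nf

section KernelConvolution

variable {E : Type*} [NormedAddCommGroup E] [NormedSpace ℝ E] [CompleteSpace E]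
  {B : E →L[ℝ] E} {ω : ℝ → E}

lemma integrableOn_Iic_exp_smul_apply {lam : ℝ} (hlam : 0 < lam)
    (hdecay : ∀ r ≤ 0, ‖exp (r • B)‖ ≤ Real.exp (lam * r)) (hω : Continuous ω) {K : ℝ}
    (hK : ∀ t, ‖ω t‖ ≤ K + |t|) (a : ℝ) :
    IntegrableOn (fun v ↦ exp (v • B) (ω v)) (Iic a) := by
  have hcont : Continuous fun v ↦ exp (v • B) (ω v) := (continuous_exp_smul B).clm_apply hω
  have hIic : IntegrableOn (fun v ↦ exp (v • B) (ω v)) (Iic 0) := by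
    refine (((integrableOn_exp_mul_Iic hlam 0).const_mul K).add
      (integrableOn_Iic_abs_mul_exp hlam)).mono' hcont.aestronglyMeasurable ?_
    rw [ae_restrict_iff' measurableSet_Iic]
    refine ae_of_all _ fun v (hv : v ≤ 0) ↦ ?_
    calc ‖exp (v • B) (ω v)‖ ≤ ‖exp (v • B)‖ * ‖ω v‖ := (exp (v • B)).le_opNorm _
      _ ≤ Real.exp (lam * v) * (K + |v|) :=
        mul_le_mul (hdecay v hv) (hK v) (norm_nonneg _) (Real.exp_pos _).le
      _ = K * Real.exp (lam * v) + |v| * Real.exp (lam * v) := by ring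
  exact (hIic.union hcont.integrableOn_Ioc).mono_set Iic_subset_Iic_union_Ioc

lemma apply_integral_Iic_exp_smul_apply {lam : ℝ} (hlam : 0 < lam)
    (hdecay : ∀ r ≤ 0, ‖exp (r • B)‖ ≤ Real.exp (lam * r)) (c : E) :
    B (∫ r in Iic (0 : ℝ), exp (r • B) c) = c := by
  have hint : IntegrableOn (fun r ↦ exp (r • B) c) (Iic (0 : ℝ)) :=
    integrableOn_Iic_exp_smul_apply hlam hdecay continuous_const
      (fun _ ↦ le_add_of_nonneg_right (abs_nonneg _)) 0
  have hlim : Tendsto (fun r : ℝ ↦ exp (r • B) c) atBot (nhds 0) := by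
    refine squeeze_zero_norm' ?_ (by simpa using
      (Real.tendsto_exp_atBot.comp (Tendsto.const_mul_atBot hlam tendsto_id)).mul_const ‖c‖)
    filter_upwards [Iic_mem_atBot (0 : ℝ)] with r hr
    exact (exp (r • B)).le_of_opNorm_le (hdecay r hr) c
  rw [← B.integral_comp_comm hint, integral_Iic_of_hasDerivAt_of_tendsto'
    (fun r _ ↦ hasDerivAt_exp_smul_apply B c r) (B.integrable_comp hint) hlim]
  simp

variable (B ω) in
noncomputable def expKernelConv (u : ℝ) : E :=
  ∫ r in Iic 0, exp (r • B) (ω (r + u))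

lemma expKernelConv_eq {u : ℝ} (hint : IntegrableOn (fun v ↦ exp (v • B) (ω v)) (Iic u)) :
    expKernelConv B ω u = exp ((-u) • B) (∫ v in Iic u, exp (v • B) (ω v)) := by
  rw [← (exp ((-u) • B)).integral_comp_comm hint]
  simp_rw [← mul_apply_eq_comp, ← exp_add_smul]
  have hshift := (measurePreserving_add_right volume u).setIntegral_preimage_emb
    (MeasurableEquiv.addRight u).measurableEmbedding (fun v ↦ exp ((-u + v) • B) (ω v)) (Iic u)
  rw [preimage_add_const_Iic, sub_self] at hshift
  simp_rw [show ∀ x : ℝ, -u + (x + u) = x from fun x ↦ by ring] at hshift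
  exact hshift

lemma hasDerivAt_expKernelConv (hω : Continuous ω)
    (hint : ∀ a, IntegrableOn (fun v ↦ exp (v • B) (ω v)) (Iic a)) (u : ℝ) :
    HasDerivAt (expKernelConv B ω) (ω u - B (expKernelConv B ω u)) u := by
  have hcont : Continuous fun v ↦ exp (v • B) (ω v) := (continuous_exp_smul B).clm_apply hω
  have hF : HasDerivAt (fun u ↦ ∫ v in Iic u, exp (v • B) (ω v)) (exp (u • B) (ω u)) u := by
    have hsplit : (fun u ↦ ∫ v in Iic u, exp (v • B) (ω v))
        = fun u ↦ (∫ v in Iic 0, exp (v • B) (ω v)) + ∫ v in 0..u, exp (v • B) (ω v) := by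
      ext u
      rw [← intervalIntegral.integral_Iic_sub_Iic (hint 0) (hint u), add_sub_cancel]
    rw [hsplit]
    exact (hcont.integral_hasStrictDerivAt 0 u).hasDerivAt.const_add _
  have hE : HasDerivAt (fun u : ℝ ↦ exp ((-u) • B)) (-(B * exp ((-u) • B))) u := by
    simpa [Function.comp_def] using (hasDerivAt_exp_smul_const' B (-u)).scomp u (hasDerivAt_neg u)
  rw [show expKernelConv B ω = _ from funext fun u ↦ expKernelConv_eq (hint u)]
  refine (hE.clm_apply hF).congr_deriv ?_
  rw [exp_neg_smul_apply_exp_smul_apply]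
  simp only [neg_apply, mul_apply_eq_comp]
  abel

lemma contDiff_expKernelConv (hω : Continuous ω)
    (hint : ∀ a, IntegrableOn (fun v ↦ exp (v • B) (ω v)) (Iic a)) :
    ContDiff ℝ 1 (expKernelConv B ω) := by
  have hderiv := hasDerivAt_expKernelConv hω hint
  have hdiff : Differentiable ℝ (expKernelConv B ω) := fun u ↦ (hderiv u).differentiableAt
  refine contDiff_one_iff_deriv.2 ⟨hdiff, ?_⟩
  rw [show deriv (expKernelConv B ω) = _ from funext fun u ↦ (hderiv u).deriv]
  exact hω.sub (B.continuous.comp hdiff.continuous)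

end KernelConvolution

open scoped Matrix.Norms.L2Operator in
lemma toEuclideanCLM_exp {n : Type*} [Fintype n] [DecidableEq n] (A : Matrix n n ℝ) :
    Matrix.toEuclideanCLM (𝕜 := ℝ) (exp A) = exp (Matrix.toEuclideanCLM (𝕜 := ℝ) A) := by
  let +nondep : NormedAlgebra ℚ (Matrix n n ℝ) := .restrictScalars ℚ ℝ _
  let +nondep : NormedAlgebra ℚ (EuclideanSpace ℝ n →L[ℝ] EuclideanSpace ℝ n) :=
    .restrictScalars ℚ ℝ _
  have hcont : Continuous (Matrix.toEuclideanCLM (𝕜 := ℝ) (n := n)) :=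
    (Matrix.toEuclideanCLM (𝕜 := ℝ) (n := n)).toAlgEquiv.toLinearMap.continuous_of_finiteDimensional
  exact map_exp _ hcont A

lemma OUstat_eq_sub_expKernelConv {m : ℕ} (A : Matrix (Fin m) (Fin m) ℝ) {lam : ℝ} (hlam : 0 < lam)
    (hdecay : ∀ r ≤ 0, ‖exp (r • Matrix.toEuclideanCLM (𝕜 := ℝ) A)‖ ≤ Real.exp (lam * r))
    {ω : ℝ → EuclideanSpace ℝ (Fin m)} (hω : Continuous ω) {K : ℝ} (hK : ∀ t, ‖ω t‖ ≤ K + |t|)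
    (u : ℝ) :
    OUstat A ω u = ω u - Matrix.toEuclideanCLM (𝕜 := ℝ) A
      (expKernelConv (Matrix.toEuclideanCLM (𝕜 := ℝ) A) ω u) := by
  set B := Matrix.toEuclideanCLM (𝕜 := ℝ) A
  have hexp : ∀ (r : ℝ) x, Matrix.toEuclideanLin (exp (r • A)) x = exp (r • B) x := by
    intro r x
    change Matrix.toEuclideanCLM (𝕜 := ℝ) (exp (r • A)) x = _
    rw [toEuclideanCLM_exp, map_smul]
  have hshift : IntegrableOn (fun r ↦ exp (r • B) (ω (r + u))) (Iic 0) :=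
    integrableOn_Iic_exp_smul_apply hlam hdecay (hω.comp (continuous_add_const u))
      (K := K + |u|) (fun t ↦ show ‖ω (t + u)‖ ≤ _ by linarith [hK (t + u), abs_add_le t u]) 0
  have hconst : IntegrableOn (fun r ↦ exp (r • B) (ω u)) (Iic (0 : ℝ)) :=
    integrableOn_Iic_exp_smul_apply hlam hdecay continuous_const
      (fun _ ↦ le_add_of_nonneg_right (abs_nonneg _)) 0
  simp only [OUstat, hexp, map_sub]
  rw [integral_sub hshift hconst]
  change -(B (expKernelConv B ω u - _)) = _
  rw [map_sub, apply_integral_Iic_exp_smul_apply hlam hdecay]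
  abel

theorem ou_holder_general {m : ℕ} (A : Matrix (Fin m) (Fin m) ℝ) (lamA : ℝ)
    (hlam : 0 < lamA)
    (hA : ∀ y : EuclideanSpace ℝ (Fin m), lamA * ‖y‖ ^ 2 ≤ ⟪Matrix.toEuclideanLin A y, y⟫)
    (ω : ℝ → EuclideanSpace ℝ (Fin m)) (hω : Continuous ω)
    (hsub_top : Tendsto (fun t : ℝ => ‖ω t‖ / |t|) atTop (nhds 0))
    (hsub_bot : Tendsto (fun t : ℝ => ‖ω t‖ / |t|) atBot (nhds 0))
    (η : ℝ) (hη1 : η < 1)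
    (hωHolder : ∀ T₁ T₂ : ℝ, T₁ < T₂ → ∃ C : ℝ, ∀ s ∈ Set.Icc T₁ T₂, ∀ t ∈ Set.Icc T₁ T₂,
      s ≤ t → ‖ω t - ω s‖ ≤ C * (t - s) ^ η) :
    ∀ T₁ T₂ : ℝ, T₁ < T₂ → ∃ C : ℝ, ∀ s ∈ Set.Icc T₁ T₂, ∀ t ∈ Set.Icc T₁ T₂,
      s ≤ t → ‖OUstat A ω t - OUstat A ω s‖ ≤ C * (t - s) ^ η := by
  intro T₁ T₂ hT
  set B := Matrix.toEuclideanCLM (𝕜 := ℝ) A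
  have hdecay : ∀ r ≤ (0 : ℝ), ‖exp (r • B)‖ ≤ Real.exp (lamA * r) :=
    fun r hr ↦ norm_exp_smul_le_of_coercive hA hr
  obtain ⟨K, hK⟩ := exists_norm_le_add_abs_of_sublinear hω hsub_top hsub_bot
  have hC1 : ContDiff ℝ 1 fun u ↦ B (expKernelConv B ω u) := B.contDiff.comp
    (contDiff_expKernelConv hω (integrableOn_Iic_exp_smul_apply hlam hdecay hω hK))
  obtain ⟨L, hL⟩ :=
    hC1.locallyLipschitz.locallyLipschitzOn.exists_lipschitzOnWith_of_compact isCompact_Icc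
  rw [show OUstat A ω = _ from funext (OUstat_eq_sub_expKernelConv A hlam hdecay hω hK)]
  exact HolderOnIcc.sub (hωHolder T₁ T₂ hT) (hL.holderOnIcc hη1.le)

theorem ou_holder {m : ℕ} (A : Matrix (Fin m) (Fin m) ℝ) (lamA : ℝ)
    (hlam : 0 < lamA)
    (hA : ∀ y : EuclideanSpace ℝ (Fin m), lamA * ‖y‖ ^ 2 ≤ ⟪Matrix.toEuclideanLin A y, y⟫)
    (ω : ℝ → EuclideanSpace ℝ (Fin m)) (hω : Continuous ω)
    (hsub_top : Tendsto (fun t : ℝ => ‖ω t‖ / |t|) atTop (nhds 0))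
    (hsub_bot : Tendsto (fun t : ℝ => ‖ω t‖ / |t|) atBot (nhds 0))
    (η : ℝ) (hη0 : 0 < η) (hη1 : η < 1)
    (hωHolder : ∀ T₁ T₂ : ℝ, T₁ < T₂ → ∃ C : ℝ, ∀ s ∈ Set.Icc T₁ T₂, ∀ t ∈ Set.Icc T₁ T₂,
      s ≤ t → ‖ω t - ω s‖ ≤ C * (t - s) ^ η) :
    ∀ T₁ T₂ : ℝ, T₁ < T₂ → ∃ C : ℝ, ∀ s ∈ Set.Icc T₁ T₂, ∀ t ∈ Set.Icc T₁ T₂,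
      s ≤ t → ‖OUstat A ω t - OUstat A ω s‖ ≤ C * (t - s) ^ η :=
  ou_holder_general A lamA hlam hA ω hω hsub_top hsub_bot η hη1 hωHolder
end

section
/- Let A be a real m×m matrix with ⟨Ay, y⟩ ≥ λ_A ‖y‖² for all y ∈ ℝ^m (λ_A > 0), let g̃ : ℝ^n × ℝ^m → ℝ^m be Lipschitz continuous with constant L satisfying λ_A > L, let x ∈ ℝ^n, ε > 0, and let ω : ℝ → ℝ^m be continuous. If y_1, y_2 : [s_0, T] → ℝ^m are continuous functions such that for i = 1,2 and all t ∈ [s_0, T], y_i(t) = y_i(s_0) + (1/ε) ∫_{s_0}^t (−A y_i(v) + g̃(x, y_i(v))) dv + ω(t) − ω(s_0), then for all t ∈ [s_0, T], ‖y_1(t) − y_2(t)‖ ≤ e^{−(λ_A − L)(t − s_0)/ε} ‖y_1(s_0) − y_2(s_0)‖. -/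
open scoped RealInnerProductSpace Topology
open MeasureTheory Set Real

/-!
The difference `z = y₁ - y₂` of two solutions no longer sees the noise `ω`, so it is a classical
solution of `ε z' = -A z + (g̃(x, y₁) - g̃(x, y₂))`. Coercivity of `A` and the Lipschitz bound on
`g̃` make this field dissipative: `⟪z, z'⟫ ≤ -c ‖z‖²` with `c = (λ_A - L) / ε`. Hence
`‖z t‖² e^{2c (t - s₀)}` is antitone, which is the claimed exponential decay.
-/

section Dissipative

variable {E : Type*} [NormedAddCommGroup E] [InnerProductSpace ℝ E]

theorem antitoneOn_norm_sq_mul_exp_of_inner_deriv_le {f f' : ℝ → E} {a b c : ℝ}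
    (hf : ContinuousOn f (Icc a b)) (hf' : ∀ t ∈ Ioo a b, HasDerivAt f (f' t) t)
    (hdiss : ∀ t ∈ Ioo a b, ⟪f t, f' t⟫ ≤ -c * ‖f t‖ ^ 2) :
    AntitoneOn (fun t => ‖f t‖ ^ 2 * exp (2 * c * (t - a))) (Icc a b) := by
  have hderiv : ∀ t ∈ Ioo a b, HasDerivAt (fun t => ‖f t‖ ^ 2 * exp (2 * c * (t - a)))
      (2 * ⟪f t, f' t⟫ * exp (2 * c * (t - a)) + ‖f t‖ ^ 2 * (exp (2 * c * (t - a)) * (2 * c)))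
      t := fun t ht => by
    have hlin : HasDerivAt (fun t => 2 * c * (t - a)) (2 * c) t := by
      simpa using ((hasDerivAt_id' t).sub_const a).const_mul (2 * c)
    exact (hf' t ht).norm_sq.mul hlin.exp
  rw [← interior_Icc] at hderiv hdiss
  refine antitoneOn_of_hasDerivWithinAt_nonpos (convex_Icc a b) ((hf.norm.pow 2).mul (by fun_prop))
    (fun t ht => (hderiv t ht).hasDerivWithinAt) fun t ht => ?_
  nlinarith [hdiss t ht, exp_pos (2 * c * (t - a))]

theorem norm_le_exp_mul_of_inner_deriv_le {f f' : ℝ → E} {a b c : ℝ}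
    (hf : ContinuousOn f (Icc a b)) (hf' : ∀ t ∈ Ioo a b, HasDerivAt f (f' t) t)
    (hdiss : ∀ t ∈ Ioo a b, ⟪f t, f' t⟫ ≤ -c * ‖f t‖ ^ 2) :
    ∀ t ∈ Icc a b, ‖f t‖ ≤ exp (-c * (t - a)) * ‖f a‖ := by
  intro t ht
  have hmono := antitoneOn_norm_sq_mul_exp_of_inner_deriv_le hf hf' hdiss
    (left_mem_Icc.2 (ht.1.trans ht.2)) ht ht.1
  simp only [sub_self, mul_zero, exp_zero, mul_one] at hmono
  have hexp : exp (2 * c * (t - a)) * exp (-c * (t - a)) ^ 2 = 1 := by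
    rw [sq, ← exp_add, ← exp_add, ← exp_zero]
    ring_nf
  refine (pow_le_pow_iff_left₀ (norm_nonneg _) (by positivity) two_ne_zero).1 ?_
  calc ‖f t‖ ^ 2 = ‖f t‖ ^ 2 * exp (2 * c * (t - a)) * exp (-c * (t - a)) ^ 2 := by
        rw [mul_assoc, hexp, mul_one]
    _ ≤ ‖f a‖ ^ 2 * exp (-c * (t - a)) ^ 2 := by gcongr
    _ = (exp (-c * (t - a)) * ‖f a‖) ^ 2 := by ring

theorem inner_sub_le_of_coercive_of_lipschitz (A : E →ₗ[ℝ] E) (G : E → E) {lam L : ℝ}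
    (hA : ∀ y, lam * ‖y‖ ^ 2 ≤ ⟪A y, y⟫) (hG : ∀ y₁ y₂, ‖G y₁ - G y₂‖ ≤ L * ‖y₁ - y₂‖)
    (y₁ y₂ : E) :
    ⟪y₁ - y₂, (-A y₁ + G y₁) - (-A y₂ + G y₂)⟫ ≤ -(lam - L) * ‖y₁ - y₂‖ ^ 2 := by
  have hsplit : (-A y₁ + G y₁) - (-A y₂ + G y₂) = -A (y₁ - y₂) + (G y₁ - G y₂) := by
    rw [map_sub]
    abel
  rw [hsplit, inner_add_right, inner_neg_right, real_inner_comm]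
  nlinarith [hA (y₁ - y₂), hG y₁ y₂, real_inner_le_norm (y₁ - y₂) (G y₁ - G y₂),
    norm_nonneg (y₁ - y₂)]

end Dissipative

section IntegralEquation

variable {E : Type*} [NormedAddCommGroup E] [NormedSpace ℝ E] [CompleteSpace E]

theorem hasDerivAt_integral_of_continuousOn {F : ℝ → E} {a b t : ℝ}
    (hF : ContinuousOn F (Icc a b)) (ht : t ∈ Ioo a b) :
    HasDerivAt (fun u => ∫ v in a..u, F v) (F t) t := by
  have hnhds : Icc a b ∈ 𝓝 t := Icc_mem_nhds ht.1 ht.2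
  exact intervalIntegral.integral_hasDerivAt_right
    (hF.mono (uIcc_subset_Icc (left_mem_Icc.2 (ht.1.trans ht.2).le)
      (Ioo_subset_Icc_self ht))).intervalIntegrable
    ⟨_, hnhds, hF.aestronglyMeasurable measurableSet_Icc⟩ (hF.continuousAt hnhds)

theorem hasDerivAt_sub_of_eq_add_smul_integral {F : E → E} (hF : Continuous F)
    {y₁ y₂ w : ℝ → E} {a b k t : ℝ}
    (hy₁c : ContinuousOn y₁ (Icc a b)) (hy₂c : ContinuousOn y₂ (Icc a b))
    (hy₁ : ∀ t ∈ Icc a b, y₁ t = y₁ a + k • (∫ v in a..t, F (y₁ v)) + w t)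
    (hy₂ : ∀ t ∈ Icc a b, y₂ t = y₂ a + k • (∫ v in a..t, F (y₂ v)) + w t)
    (ht : t ∈ Ioo a b) :
    HasDerivAt (fun s => y₁ s - y₂ s) (k • (F (y₁ t) - F (y₂ t))) t := by
  have hint := ((hasDerivAt_integral_of_continuousOn (hF.comp_continuousOn hy₁c) ht).sub
    (hasDerivAt_integral_of_continuousOn (hF.comp_continuousOn hy₂c) ht)).const_smul k
  refine (hint.const_add (y₁ a - y₂ a)).congr_of_eventuallyEq ?_
  filter_upwards [Icc_mem_nhds ht.1 ht.2] with s hs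
  simp only [Pi.smul_apply, Pi.sub_apply, Function.comp_apply]
  rw [hy₁ s hs, hy₂ s hs, smul_sub]
  abel

end IntegralEquation

theorem fast_eq_contraction_general {n m : ℕ} (A : Matrix (Fin m) (Fin m) ℝ) (lamA L : ℝ)
    (hA : ∀ y : EuclideanSpace ℝ (Fin m), lamA * ‖y‖ ^ 2 ≤ ⟪Matrix.toEuclideanLin A y, y⟫)
    (g : EuclideanSpace ℝ (Fin n) → EuclideanSpace ℝ (Fin m) → EuclideanSpace ℝ (Fin m))
    (hg : ∀ x₁ x₂ y₁ y₂, ‖g x₁ y₁ - g x₂ y₂‖ ≤ L * (‖x₁ - x₂‖ + ‖y₁ - y₂‖))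
    (x : EuclideanSpace ℝ (Fin n)) (ε : ℝ) (hε : 0 < ε)
    (ω : ℝ → EuclideanSpace ℝ (Fin m))
    (s₀ T : ℝ)
    (y₁ y₂ : ℝ → EuclideanSpace ℝ (Fin m))
    (hy₁c : ContinuousOn y₁ (Set.Icc s₀ T)) (hy₂c : ContinuousOn y₂ (Set.Icc s₀ T))
    (hy₁ : ∀ t ∈ Set.Icc s₀ T, y₁ t = y₁ s₀
      + ε⁻¹ • (∫ v in s₀..t, (-(Matrix.toEuclideanLin A (y₁ v)) + g x (y₁ v)))
      + (ω t - ω s₀))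
    (hy₂ : ∀ t ∈ Set.Icc s₀ T, y₂ t = y₂ s₀
      + ε⁻¹ • (∫ v in s₀..t, (-(Matrix.toEuclideanLin A (y₂ v)) + g x (y₂ v)))
      + (ω t - ω s₀)) :
    ∀ t ∈ Set.Icc s₀ T,
      ‖y₁ t - y₂ t‖ ≤ Real.exp (-(lamA - L) * (t - s₀) / ε) * ‖y₁ s₀ - y₂ s₀‖ := by
  intro t ht
  have hG : ∀ y₁ y₂, ‖g x y₁ - g x y₂‖ ≤ L * ‖y₁ - y₂‖ := fun y₁ y₂ => by
    simpa using hg x x y₁ y₂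
  have hF : Continuous fun y => -(Matrix.toEuclideanLin A y) + g x y :=
    (Matrix.toEuclideanLin A).continuous_of_finiteDimensional.neg.add
      (LipschitzWith.of_dist_le' (K := L) fun y₁ y₂ => by
        simpa only [dist_eq_norm] using hG y₁ y₂).continuous
  have hdiff := fun u (hu : u ∈ Ioo s₀ T) =>
    hasDerivAt_sub_of_eq_add_smul_integral (w := fun t => ω t - ω s₀) hF hy₁c hy₂c hy₁ hy₂ hu
  refine (norm_le_exp_mul_of_inner_deriv_le (f := fun s => y₁ s - y₂ s) (c := (lamA - L) / ε)
    (hy₁c.sub hy₂c) hdiff (fun u _ => ?_) t ht).trans_eq (by ring_nf)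
  calc ⟪y₁ u - y₂ u, ε⁻¹ • _⟫
      ≤ ε⁻¹ * (-(lamA - L) * ‖y₁ u - y₂ u‖ ^ 2) := by
        rw [real_inner_smul_right]
        exact mul_le_mul_of_nonneg_left
          (inner_sub_le_of_coercive_of_lipschitz _ _ hA hG _ _) (inv_nonneg.2 hε.le)
    _ = -((lamA - L) / ε) * ‖y₁ u - y₂ u‖ ^ 2 := by ring

theorem fast_eq_contraction {n m : ℕ} (A : Matrix (Fin m) (Fin m) ℝ) (lamA L : ℝ)
    (hlam : 0 < lamA) (hLlam : L < lamA)
    (hA : ∀ y : EuclideanSpace ℝ (Fin m), lamA * ‖y‖ ^ 2 ≤ ⟪Matrix.toEuclideanLin A y, y⟫)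
    (g : EuclideanSpace ℝ (Fin n) → EuclideanSpace ℝ (Fin m) → EuclideanSpace ℝ (Fin m))
    (hg : ∀ x₁ x₂ y₁ y₂, ‖g x₁ y₁ - g x₂ y₂‖ ≤ L * (‖x₁ - x₂‖ + ‖y₁ - y₂‖))
    (x : EuclideanSpace ℝ (Fin n)) (ε : ℝ) (hε : 0 < ε)
    (ω : ℝ → EuclideanSpace ℝ (Fin m)) (hω : Continuous ω)
    (s₀ T : ℝ) (hs₀T : s₀ ≤ T)
    (y₁ y₂ : ℝ → EuclideanSpace ℝ (Fin m))
    (hy₁c : ContinuousOn y₁ (Set.Icc s₀ T)) (hy₂c : ContinuousOn y₂ (Set.Icc s₀ T))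
    (hy₁ : ∀ t ∈ Set.Icc s₀ T, y₁ t = y₁ s₀
      + ε⁻¹ • (∫ v in s₀..t, (-(Matrix.toEuclideanLin A (y₁ v)) + g x (y₁ v)))
      + (ω t - ω s₀))
    (hy₂ : ∀ t ∈ Set.Icc s₀ T, y₂ t = y₂ s₀
      + ε⁻¹ • (∫ v in s₀..t, (-(Matrix.toEuclideanLin A (y₂ v)) + g x (y₂ v)))
      + (ω t - ω s₀)) :
    ∀ t ∈ Set.Icc s₀ T,
      ‖y₁ t - y₂ t‖ ≤ Real.exp (-(lamA - L) * (t - s₀) / ε) * ‖y₁ s₀ - y₂ s₀‖ :=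
  fast_eq_contraction_general A lamA L hA g hg x ε hε ω s₀ T y₁ y₂ hy₁c hy₂c hy₁ hy₂
end

section
/- Let A be a real m×m matrix with ⟨Ay, y⟩ ≥ λ_A ‖y‖² for all y ∈ ℝ^m (λ_A > 0), let g̃ : ℝ^n × ℝ^m → ℝ^m be Lipschitz continuous with constant L satisfying λ_A > L, let x ∈ ℝ^n, ε > 0, μ > 0, and let z : [0,T] → ℝ^m be continuous. If y : [0,T] → ℝ^m is continuously differentiable and satisfies y'(t) = (1/ε)(−A y(t) + g̃(x, y(t) + z(t))) for all t, then for all t ∈ [0,T]: (d/dt)‖y(t)‖² ≤ −((2(λ_A − L) − μ)/ε) ‖y(t)‖² + (1/(με)) (L(‖x‖ + ‖z(t)‖) + ‖g̃(0,0)‖)². -/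
/-!
Differentiating along the flow gives `d/dt ‖y‖² = (2/ε)(-⟪Ay, y⟫ + ⟪g̃(x, y + z), y⟫)`.
Coercivity bounds the first term by `-λ_A ‖y‖²`; the Lipschitz bound gives
`‖g̃(x, y + z)‖ ≤ L ‖y‖ + B` with `B = L (‖x‖ + ‖z‖) + ‖g̃(0, 0)‖`, and Young's inequality
`2 B ‖y‖ ≤ μ ‖y‖² + B² / μ` absorbs the cross term.
-/

open scoped RealInnerProductSpace

section Lipschitz

variable {E F G : Type*} [SeminormedAddCommGroup E] [SeminormedAddCommGroup F]
  [SeminormedAddCommGroup G] {g : E → F → G} {L : ℝ}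

theorem norm_apply_le_of_lipschitz_bound
    (hg : ∀ x₁ x₂ y₁ y₂, ‖g x₁ y₁ - g x₂ y₂‖ ≤ L * (‖x₁ - x₂‖ + ‖y₁ - y₂‖)) (x : E) (y : F) :
    ‖g x y‖ ≤ L * (‖x‖ + ‖y‖) + ‖g 0 0‖ :=
  calc ‖g x y‖ ≤ ‖g x y - g 0 0‖ + ‖g 0 0‖ := norm_le_norm_sub_add _ _
    _ ≤ L * (‖x‖ + ‖y‖) + ‖g 0 0‖ := by simpa using add_le_add_left (hg x 0 y 0) ‖g 0 0‖

theorem nonneg_of_lipschitz_bound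
    (hg : ∀ x₁ x₂ y₁ y₂, ‖g x₁ y₁ - g x₂ y₂‖ ≤ L * (‖x₁ - x₂‖ + ‖y₁ - y₂‖)) {y : F}
    (hy : 0 < ‖y‖) : 0 ≤ L := by
  have h := (norm_nonneg _).trans (hg 0 0 y 0)
  simp only [sub_self, norm_zero, sub_zero, zero_add] at h
  exact nonneg_of_mul_nonneg_left h hy

end Lipschitz

theorem inner_apply_add_le_of_lipschitz_bound {E F : Type*} [SeminormedAddCommGroup E]
    [NormedAddCommGroup F] [InnerProductSpace ℝ F] {g : E → F → F} {L : ℝ}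
    (hg : ∀ x₁ x₂ y₁ y₂, ‖g x₁ y₁ - g x₂ y₂‖ ≤ L * (‖x₁ - x₂‖ + ‖y₁ - y₂‖)) (x : E) (y z : F) :
    ⟪g x (y + z), y⟫ ≤ (L * ‖y‖ + (L * (‖x‖ + ‖z‖) + ‖g 0 0‖)) * ‖y‖ := by
  rcases (norm_nonneg y).eq_or_lt with hy | hy
  · simp [norm_eq_zero.mp hy.symm]
  have hL := nonneg_of_lipschitz_bound hg hy
  calc ⟪g x (y + z), y⟫ ≤ ‖g x (y + z)‖ * ‖y‖ := real_inner_le_norm _ _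
    _ ≤ (L * (‖x‖ + ‖y + z‖) + ‖g 0 0‖) * ‖y‖ := by
        gcongr; exact norm_apply_le_of_lipschitz_bound hg x (y + z)
    _ ≤ (L * (‖x‖ + (‖y‖ + ‖z‖)) + ‖g 0 0‖) * ‖y‖ := by gcongr; exact norm_add_le y z
    _ = (L * ‖y‖ + (L * (‖x‖ + ‖z‖) + ‖g 0 0‖)) * ‖y‖ := by ring

theorem two_mul_inv_mul_le_of_coercive {ε μ lam L a c r B : ℝ} (hε : 0 < ε) (hμ : 0 < μ)
    (ha : lam * r ^ 2 ≤ a) (hc : c ≤ (L * r + B) * r) :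
    2 * (ε⁻¹ * (-a + c)) ≤ -((2 * (lam - L) - μ) / ε) * r ^ 2 + 1 / (μ * ε) * B ^ 2 := by
  have young : 2 * B * r ≤ μ * r ^ 2 + B ^ 2 / μ := by
    have h : 0 ≤ (μ * r - B) ^ 2 / μ := by positivity
    rw [sub_sq, add_div] at h
    field_simp at h ⊢
    linarith
  have key : 2 * (-a + c) ≤ -(2 * (lam - L) - μ) * r ^ 2 + B ^ 2 / μ := by nlinarith
  calc 2 * (ε⁻¹ * (-a + c)) = ε⁻¹ * (2 * (-a + c)) := by ring
    _ ≤ ε⁻¹ * (-(2 * (lam - L) - μ) * r ^ 2 + B ^ 2 / μ) := by gcongr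
    _ = -((2 * (lam - L) - μ) / ε) * r ^ 2 + 1 / (μ * ε) * B ^ 2 := by field_simp

theorem fast_eq_energy_estimate_general {n m : ℕ} (A : Matrix (Fin m) (Fin m) ℝ) (lamA L : ℝ)
    (hA : ∀ y : EuclideanSpace ℝ (Fin m), lamA * ‖y‖ ^ 2 ≤ ⟪Matrix.toEuclideanLin A y, y⟫)
    (g : EuclideanSpace ℝ (Fin n) → EuclideanSpace ℝ (Fin m) → EuclideanSpace ℝ (Fin m))
    (hg : ∀ x₁ x₂ y₁ y₂, ‖g x₁ y₁ - g x₂ y₂‖ ≤ L * (‖x₁ - x₂‖ + ‖y₁ - y₂‖))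
    (x : EuclideanSpace ℝ (Fin n)) (ε μ : ℝ) (hε : 0 < ε) (hμ : 0 < μ)
    (T : ℝ)
    (z : ℝ → EuclideanSpace ℝ (Fin m))
    (y : ℝ → EuclideanSpace ℝ (Fin m))
    (hy : ∀ t ∈ Set.Icc (0 : ℝ) T,
      HasDerivAt y (ε⁻¹ • (-(Matrix.toEuclideanLin A (y t)) + g x (y t + z t))) t) :
    ∀ t ∈ Set.Icc (0 : ℝ) T,
      deriv (fun s => ‖y s‖ ^ 2) t ≤
        -((2 * (lamA - L) - μ) / ε) * ‖y t‖ ^ 2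
          + (1 / (μ * ε)) * (L * (‖x‖ + ‖z t‖) + ‖g 0 0‖) ^ 2 := by
  intro t ht
  rw [(hy t ht).norm_sq.deriv, real_inner_comm, real_inner_smul_left, inner_add_left,
    inner_neg_left]
  exact two_mul_inv_mul_le_of_coercive hε hμ (hA (y t))
    (inner_apply_add_le_of_lipschitz_bound hg x (y t) (z t))

theorem fast_eq_energy_estimate {n m : ℕ} (A : Matrix (Fin m) (Fin m) ℝ) (lamA L : ℝ)
    (hlam : 0 < lamA) (hLlam : L < lamA)
    (hA : ∀ y : EuclideanSpace ℝ (Fin m), lamA * ‖y‖ ^ 2 ≤ ⟪Matrix.toEuclideanLin A y, y⟫)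
    (g : EuclideanSpace ℝ (Fin n) → EuclideanSpace ℝ (Fin m) → EuclideanSpace ℝ (Fin m))
    (hg : ∀ x₁ x₂ y₁ y₂, ‖g x₁ y₁ - g x₂ y₂‖ ≤ L * (‖x₁ - x₂‖ + ‖y₁ - y₂‖))
    (x : EuclideanSpace ℝ (Fin n)) (ε μ : ℝ) (hε : 0 < ε) (hμ : 0 < μ)
    (T : ℝ) (hT : 0 < T)
    (z : ℝ → EuclideanSpace ℝ (Fin m)) (hz : ContinuousOn z (Set.Icc 0 T))
    (y : ℝ → EuclideanSpace ℝ (Fin m))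
    (hy : ∀ t ∈ Set.Icc (0 : ℝ) T,
      HasDerivAt y (ε⁻¹ • (-(Matrix.toEuclideanLin A (y t)) + g x (y t + z t))) t) :
    ∀ t ∈ Set.Icc (0 : ℝ) T,
      deriv (fun s => ‖y s‖ ^ 2) t ≤
        -((2 * (lamA - L) - μ) / ε) * ‖y t‖ ^ 2
          + (1 / (μ * ε)) * (L * (‖x‖ + ‖z t‖) + ‖g 0 0‖) ^ 2 :=
  fast_eq_energy_estimate_general A lamA L hA g hg x ε μ hε hμ T z y hy
end

section
/- Let A be a real m×m matrix with ⟨Ay, y⟩ ≥ λ_A ‖y‖² for all y ∈ ℝ^m (λ_A > 0), let g̃ : ℝ^n × ℝ^m → ℝ^m be Lipschitz continuous with constant L satisfying λ_A > L, let ε > 0, and let ω : ℝ → ℝ^m be continuous. Suppose x_1, x_2 ∈ ℝ^n and y_1, y_2 : ℝ → ℝ^m are bounded continuous functions such that for i = 1,2 and all s ≤ t, y_i(t) = y_i(s) + (1/ε) ∫_s^t (−A y_i(v) + g̃(x_i, y_i(v))) dv + ω(t) − ω(s). Then for all t ∈ ℝ, ‖y_1(t) − y_2(t)‖ ≤ (L/(λ_A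 − L)) ‖x_1 − x_2‖. -/
open scoped RealInnerProductSpace
open MeasureTheory Filter

/-!
The common noise `ω` cancels in the difference `z = y₁ - y₂`, which is therefore a classical
solution of `ε z' = -A z + (g(x₁, y₁) - g(x₂, y₂))`. Coercivity of `A` and the Lipschitz bound
give `(d/dt) (‖z‖² - C²) ≤ -((λ_A - L)/ε) (‖z‖² - C²)` with `C = L ‖x₁ - x₂‖ / (λ_A - L)`.
A bounded function with this decay property on the whole line is nonpositive: running the
inequality backwards from a time where it were positive would make it blow up as `t → -∞`.
-/

theorem hasDerivAt_of_forall_le_eq_add_integral {E : Type*} [NormedAddCommGroup E]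
    [NormedSpace ℝ E] [CompleteSpace E] {z f : ℝ → E} (hf : Continuous f)
    (hz : ∀ s t, s ≤ t → z t = z s + ∫ v in s..t, f v) (t : ℝ) :
    HasDerivAt z (f t) t := by
  have hz₀ : ∀ u, z u = z 0 + ∫ v in (0 : ℝ)..u, f v := by
    intro u
    rcases le_total 0 u with h | h
    · exact hz 0 u h
    · rw [hz u 0 h, intervalIntegral.integral_symm]
      abel
  exact ((hf.integral_hasStrictDerivAt 0 t).hasDerivAt.const_add (z 0)).congr_of_eventuallyEq
    (Eventually.of_forall hz₀)

theorem hasDerivAt_sub_of_common_forcing {E : Type*} [NormedAddCommGroup E]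
    [NormedSpace ℝ E] [CompleteSpace E] {y₁ y₂ f₁ f₂ ω : ℝ → E}
    (hf₁ : Continuous f₁) (hf₂ : Continuous f₂)
    (hy₁ : ∀ s t, s ≤ t → y₁ t = y₁ s + (∫ v in s..t, f₁ v) + (ω t - ω s))
    (hy₂ : ∀ s t, s ≤ t → y₂ t = y₂ s + (∫ v in s..t, f₂ v) + (ω t - ω s)) (t : ℝ) :
    HasDerivAt (fun t => y₁ t - y₂ t) (f₁ t - f₂ t) t := by
  refine hasDerivAt_of_forall_le_eq_add_integral (f := fun v => f₁ v - f₂ v) (hf₁.sub hf₂)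
    (fun s t hst => ?_) t
  rw [intervalIntegral.integral_sub (hf₁.intervalIntegrable s t)
    (hf₂.intervalIntegrable s t), hy₁ s t hst, hy₂ s t hst]
  abel

theorem nonpos_of_hasDerivAt_le_neg_mul_of_forall_le {u u' : ℝ → ℝ} {K B : ℝ} (hK : 0 < K)
    (hu : ∀ t, HasDerivAt u (u' t) t) (hu' : ∀ t, u' t ≤ -K * u t) (hB : ∀ t, u t ≤ B)
    (t : ℝ) : u t ≤ 0 := by
  have hanti : Antitone fun s => Real.exp (K * s) * u s := by
    refine antitone_of_hasDerivAt_nonpos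
      (fun s => (((hasDerivAt_id s).const_mul K).exp).mul (hu s)) fun s => ?_
    have := hu' s
    simp only [id, mul_one, Pi.zero_apply]
    nlinarith [Real.exp_pos (K * s)]
  have hlim : Tendsto (fun s => Real.exp (K * s) * B) atBot (nhds 0) := by
    simpa using (Real.tendsto_exp_atBot.comp (tendsto_id.const_mul_atBot hK)).mul_const B
  have hexp : Real.exp (K * t) * u t ≤ 0 := by
    refine ge_of_tendsto hlim ?_
    filter_upwards [eventually_le_atBot t] with s hst
    exact (hanti hst).trans (mul_le_mul_of_nonneg_left (hB s) (Real.exp_pos _).le)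
  exact nonpos_of_mul_nonpos_right hexp (Real.exp_pos _)

theorem inner_neg_add_le_of_coercive {E : Type*} [NormedAddCommGroup E] [InnerProductSpace ℝ E]
    {z a w : E} {lam L C : ℝ} (ha : lam * ‖z‖ ^ 2 ≤ ⟪a, z⟫)
    (hw : ‖w‖ ≤ (lam - L) * C + L * ‖z‖) (hLlam : L < lam) :
    ⟪z, -a + w⟫ ≤ -((lam - L) / 2) * (‖z‖ ^ 2 - C ^ 2) := by
  have hzw : ⟪z, w⟫ ≤ ((lam - L) * C + L * ‖z‖) * ‖z‖ :=
    (real_inner_le_norm z w).trans (by rw [mul_comm]; gcongr)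
  rw [inner_add_right, inner_neg_right, real_inner_comm]
  nlinarith [mul_nonneg (sub_pos.2 hLlam).le (sq_nonneg (‖z‖ - C))]

theorem lipschitzWith_right_of_norm_sub_le {X Y Z : Type*} [SeminormedAddCommGroup X]
    [SeminormedAddCommGroup Y] [SeminormedAddCommGroup Z] {g : X → Y → Z} {L : ℝ}
    (hg : ∀ x₁ x₂ y₁ y₂, ‖g x₁ y₁ - g x₂ y₂‖ ≤ L * (‖x₁ - x₂‖ + ‖y₁ - y₂‖)) (x : X) :
    LipschitzWith (Real.toNNReal L) (g x) :=
  LipschitzWith.of_dist_le' fun y₁ y₂ => by simpa [dist_eq_norm] using hg x x y₁ y₂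

theorem two_mul_inner_sub_drift_le {X E : Type*} [SeminormedAddCommGroup X]
    [NormedAddCommGroup E] [InnerProductSpace ℝ E] (T : E →ₗ[ℝ] E) (g : X → E → E)
    {lam L ε : ℝ} (hT : ∀ y, lam * ‖y‖ ^ 2 ≤ ⟪T y, y⟫)
    (hg : ∀ x₁ x₂ y₁ y₂, ‖g x₁ y₁ - g x₂ y₂‖ ≤ L * (‖x₁ - x₂‖ + ‖y₁ - y₂‖))
    (hLlam : L < lam) (hε : 0 < ε) (x₁ x₂ : X) (y₁ y₂ : E) :
    2 * ⟪y₁ - y₂, ε⁻¹ • (-T y₁ + g x₁ y₁) - ε⁻¹ • (-T y₂ + g x₂ y₂)⟫ ≤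
      -((lam - L) / ε) * (‖y₁ - y₂‖ ^ 2 - (L / (lam - L) * ‖x₁ - x₂‖) ^ 2) := by
  have hw : ‖g x₁ y₁ - g x₂ y₂‖ ≤ (lam - L) * (L / (lam - L) * ‖x₁ - x₂‖) + L * ‖y₁ - y₂‖ := by
    calc _ ≤ L * (‖x₁ - x₂‖ + ‖y₁ - y₂‖) := hg _ _ _ _
      _ = _ := by field_simp [(sub_pos.2 hLlam).ne']
  have key := inner_neg_add_le_of_coercive (hT (y₁ - y₂)) hw hLlam
  rw [← smul_sub, inner_smul_right,
    show -T y₁ + g x₁ y₁ - (-T y₂ + g x₂ y₂) = -T (y₁ - y₂) + (g x₁ y₁ - g x₂ y₂) by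
      rw [map_sub]; abel]
  linear_combination 2 * mul_le_mul_of_nonneg_left key (inv_pos.2 hε).le

theorem fixed_point_lipschitz_in_x_general {n m : ℕ} (A : Matrix (Fin m) (Fin m) ℝ) (lamA L : ℝ)
    (hLlam : L < lamA)
    (hA : ∀ y : EuclideanSpace ℝ (Fin m), lamA * ‖y‖ ^ 2 ≤ ⟪Matrix.toEuclideanLin A y, y⟫)
    (g : EuclideanSpace ℝ (Fin n) → EuclideanSpace ℝ (Fin m) → EuclideanSpace ℝ (Fin m))
    (hg : ∀ x₁ x₂ y₁ y₂, ‖g x₁ y₁ - g x₂ y₂‖ ≤ L * (‖x₁ - x₂‖ + ‖y₁ - y₂‖))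
    (ε : ℝ) (hε : 0 < ε)
    (ω : ℝ → EuclideanSpace ℝ (Fin m))
    (x₁ x₂ : EuclideanSpace ℝ (Fin n))
    (y₁ y₂ : ℝ → EuclideanSpace ℝ (Fin m))
    (hy₁c : Continuous y₁) (hy₂c : Continuous y₂)
    (hy₁b : ∃ M : ℝ, ∀ t : ℝ, ‖y₁ t‖ ≤ M) (hy₂b : ∃ M : ℝ, ∀ t : ℝ, ‖y₂ t‖ ≤ M)
    (hy₁ : ∀ s t : ℝ, s ≤ t → y₁ t = y₁ s
      + ε⁻¹ • (∫ v in s..t, (-(Matrix.toEuclideanLin A (y₁ v)) + g x₁ (y₁ v)))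
      + (ω t - ω s))
    (hy₂ : ∀ s t : ℝ, s ≤ t → y₂ t = y₂ s
      + ε⁻¹ • (∫ v in s..t, (-(Matrix.toEuclideanLin A (y₂ v)) + g x₂ (y₂ v)))
      + (ω t - ω s)) :
    ∀ t : ℝ, ‖y₁ t - y₂ t‖ ≤ (L / (lamA - L)) * ‖x₁ - x₂‖ := by
  obtain ⟨M₁, hM₁⟩ := hy₁b
  obtain ⟨M₂, hM₂⟩ := hy₂b
  set T := Matrix.toEuclideanLin A
  set C := L / (lamA - L) * ‖x₁ - x₂‖
  have hμ : 0 < lamA - L := sub_pos.2 hLlam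
  have hC : 0 ≤ C := by
    simp only [C, div_mul_eq_mul_div]
    exact div_nonneg ((norm_nonneg _).trans (by simpa using hg x₁ x₂ 0 0)) hμ.le
  have hT : Continuous T := T.continuous_of_finiteDimensional
  have hgx x : Continuous (g x) := (lipschitzWith_right_of_norm_sub_le hg x).continuous
  have hdrift : ∀ x (y : ℝ → _), Continuous y →
      Continuous fun v => ε⁻¹ • (-T (y v) + g x (y v)) := by fun_prop
  have hz := hasDerivAt_sub_of_common_forcing (hdrift x₁ y₁ hy₁c) (hdrift x₂ y₂ hy₂c)
    (by simpa only [intervalIntegral.integral_smul] using hy₁)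
    (by simpa only [intervalIntegral.integral_smul] using hy₂)
  have hbound : ∀ t, ‖y₁ t - y₂ t‖ ^ 2 - C ^ 2 ≤ (M₁ + M₂) ^ 2 := fun t => by
    have := (norm_sub_le _ _).trans (add_le_add (hM₁ t) (hM₂ t))
    nlinarith [norm_nonneg (y₁ t - y₂ t), sq_nonneg C]
  intro t
  have hsq := nonpos_of_hasDerivAt_le_neg_mul_of_forall_le (div_pos hμ hε)
    (fun s => ((hz s).norm_sq).sub_const (C ^ 2))
    (fun s => two_mul_inner_sub_drift_le T g hA hg hLlam hε x₁ x₂ (y₁ s) (y₂ s)) hbound t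
  exact (pow_le_pow_iff_left₀ (norm_nonneg _) hC two_ne_zero).1 (by linarith)

theorem fixed_point_lipschitz_in_x {n m : ℕ} (A : Matrix (Fin m) (Fin m) ℝ) (lamA L : ℝ)
    (hlam : 0 < lamA) (hLlam : L < lamA)
    (hA : ∀ y : EuclideanSpace ℝ (Fin m), lamA * ‖y‖ ^ 2 ≤ ⟪Matrix.toEuclideanLin A y, y⟫)
    (g : EuclideanSpace ℝ (Fin n) → EuclideanSpace ℝ (Fin m) → EuclideanSpace ℝ (Fin m))
    (hg : ∀ x₁ x₂ y₁ y₂, ‖g x₁ y₁ - g x₂ y₂‖ ≤ L * (‖x₁ - x₂‖ + ‖y₁ - y₂‖))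
    (ε : ℝ) (hε : 0 < ε)
    (ω : ℝ → EuclideanSpace ℝ (Fin m)) (hω : Continuous ω)
    (x₁ x₂ : EuclideanSpace ℝ (Fin n))
    (y₁ y₂ : ℝ → EuclideanSpace ℝ (Fin m))
    (hy₁c : Continuous y₁) (hy₂c : Continuous y₂)
    (hy₁b : ∃ M : ℝ, ∀ t : ℝ, ‖y₁ t‖ ≤ M) (hy₂b : ∃ M : ℝ, ∀ t : ℝ, ‖y₂ t‖ ≤ M)
    (hy₁ : ∀ s t : ℝ, s ≤ t → y₁ t = y₁ s
      + ε⁻¹ • (∫ v in s..t, (-(Matrix.toEuclideanLin A (y₁ v)) + g x₁ (y₁ v)))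
      + (ω t - ω s))
    (hy₂ : ∀ s t : ℝ, s ≤ t → y₂ t = y₂ s
      + ε⁻¹ • (∫ v in s..t, (-(Matrix.toEuclideanLin A (y₂ v)) + g x₂ (y₂ v)))
      + (ω t - ω s)) :
    ∀ t : ℝ, ‖y₁ t - y₂ t‖ ≤ (L / (lamA - L)) * ‖x₁ - x₂‖ :=
  fixed_point_lipschitz_in_x_general A lamA L hLlam hA g hg ε hε ω x₁ x₂ y₁ y₂ hy₁c hy₂c hy₁b hy₂b
    hy₁ hy₂
end

section
/- Let A be a real m×m matrix with ⟨Ay, y⟩ ≥ λ_A ‖y‖² for all y ∈ ℝ^m (λ_A > 0), let g̃ : ℝ^n × ℝ^m → ℝ^m be Lipschitz continuous with constant L satisfying λ_A > L, let ε > 0, let ω : ℝ → ℝ^m be continuous, and let X : [a,b] → ℝ^n be continuous. Suppose Y, Ŷ : [a,b] → ℝ^m are continuous and satisfy, for all t ∈ [a,b], Y(t) = Y(a) + (1/ε) ∫_a^t (−A Y(v) + g̃(X(v), Y(v))) dv + ω(t/ε) − ω(a/ε) and Ŷ(t) = Ŷ(a) + (1/ε) ∫_a^t (−A Ŷ(v)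 + g̃(X(a), Ŷ(v))) dv + ω(t/ε) − ω(a/ε). Then for all r ∈ [a,b], ‖Y(r) − Ŷ(r)‖ ≤ e^{−(λ_A − L)(r − a)/ε} ‖Y(a) − Ŷ(a)‖ + (L/ε) ∫_a^r e^{−(λ_A − L)(r − v)/ε} ‖X(v) − X(a)‖ dv. -/
/-!
In the difference `Z = Y - Ŷ` the noise `ω` cancels, and `ε Z' = -A Z + g̃(X, Y) - g̃(X(a), Ŷ)`.
Coercivity of `A` and the Lipschitz bound on `g̃` give the one-sided estimate
`⟪Z', Z⟫ ≤ -c ‖Z‖² + f ‖Z‖` with `c = (λ_A - L)/ε` and `f(t) = (L/ε) ‖X(t) - X(a)‖`.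
For `u(t) = e^{c (t - a)} Z(t)` this reads `⟪u', u⟫ ≤ e^{c (t - a)} f ‖u‖`, so `‖u‖` grows at rate
at most `e^{c (t - a)} f`; integrating and multiplying back by `e^{-c (r - a)}` gives the estimate.
-/

open scoped RealInnerProductSpace
open MeasureTheory

open Set Filter Topology

section

variable {E : Type*} [NormedAddCommGroup E]

theorem continuous_uncurry_of_norm_sub_le {X F : Type*} [SeminormedAddCommGroup X]
    [SeminormedAddCommGroup F] {g : X → F → E} {L : ℝ}
    (hg : ∀ x₁ x₂ y₁ y₂, ‖g x₁ y₁ - g x₂ y₂‖ ≤ L * (‖x₁ - x₂‖ + ‖y₁ - y₂‖)) :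
    Continuous (Function.uncurry g) := by
  refine continuous_iff_continuousAt.2 fun p => ?_
  rw [ContinuousAt, tendsto_iff_norm_sub_tendsto_zero]
  have hbound : Tendsto (fun q : X × F => L * (‖q.1 - p.1‖ + ‖q.2 - p.2‖)) (𝓝 p) (𝓝 0) := by
    have : Continuous fun q : X × F => L * (‖q.1 - p.1‖ + ‖q.2 - p.2‖) := by fun_prop
    simpa using this.tendsto p
  exact squeeze_zero (fun _ => norm_nonneg _) (fun q => hg _ _ _ _) hbound

variable [NormedSpace ℝ E]

theorem continuousOn_integral_Icc {w : ℝ → E} {a b : ℝ} (hw : ContinuousOn w (Icc a b)) :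
    ContinuousOn (fun s => ∫ v in a..s, w v) (Icc a b) :=
  (intervalIntegral.continuousOn_primitive hw.integrableOn_Icc).congr
    fun _ hs => intervalIntegral.integral_of_le hs.1

theorem sub_eq_add_integral_of_eq_add_integral {y₁ y₂ F₁ F₂ n : ℝ → E} {a b κ : ℝ}
    (hF₁ : ContinuousOn F₁ (Icc a b)) (hF₂ : ContinuousOn F₂ (Icc a b))
    (hy₁ : ∀ t ∈ Icc a b, y₁ t = y₁ a + κ • (∫ v in a..t, F₁ v) + n t)
    (hy₂ : ∀ t ∈ Icc a b, y₂ t = y₂ a + κ • (∫ v in a..t, F₂ v) + n t) :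
    ∀ t ∈ Icc a b, y₁ t - y₂ t = (y₁ a - y₂ a) + ∫ v in a..t, κ • (F₁ v - F₂ v) := by
  intro t ht
  have hsub : uIcc a t ⊆ Icc a b := by
    rw [uIcc_of_le ht.1]; exact Icc_subset_Icc_right ht.2
  rw [intervalIntegral.integral_smul, intervalIntegral.integral_sub
    (hF₁.mono hsub).intervalIntegrable (hF₂.mono hsub).intervalIntegrable,
    hy₁ t ht, hy₂ t ht, smul_sub]
  abel

variable [CompleteSpace E]

theorem hasDerivWithinAt_integral_Ici {w : ℝ → E} {a b t : ℝ} (hw : ContinuousOn w (Icc a b))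
    (ht : t ∈ Ico a b) : HasDerivWithinAt (fun s => ∫ v in a..s, w v) (w t) (Ici t) t := by
  have hmem : Icc a b ∈ 𝓝[>] t := Icc_mem_nhdsGT_of_mem ht
  refine intervalIntegral.integral_hasDerivWithinAt_right (t := Ioi t) ?_ ?_ ?_
  · exact (hw.mono (Icc_subset_Icc_right ht.2.le)).intervalIntegrable_of_Icc ht.1
  · exact (hw.stronglyMeasurableAtFilter_nhdsWithin measurableSet_Icc t).filter_mono
      (nhdsWithin_le_of_mem hmem)
  · exact (hw t (Ico_subset_Icc_self ht)).mono_of_mem_nhdsWithin hmem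

theorem hasDerivWithinAt_Ici_of_eq_add_integral {z w : ℝ → E} {a b t : ℝ}
    (hw : ContinuousOn w (Icc a b)) (hz : ∀ s ∈ Icc a b, z s = z a + ∫ v in a..s, w v)
    (ht : t ∈ Ico a b) : HasDerivWithinAt z (w t) (Ici t) t :=
  ((hasDerivWithinAt_integral_Ici hw ht).const_add (z a)).congr_of_eventuallyEq
    (eventually_of_mem (Icc_mem_nhdsGE_of_mem ht) hz) (hz t (Ico_subset_Icc_self ht))

end

section

variable {E : Type*} [NormedAddCommGroup E] [InnerProductSpace ℝ E]

theorem norm_le_add_integral_of_inner_deriv_le {u u' : ℝ → E} {h : ℝ → ℝ} {a b : ℝ}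
    (hu : ContinuousOn u (Icc a b)) (hu' : ∀ t ∈ Ico a b, HasDerivWithinAt u (u' t) (Ici t) t)
    (hh : ContinuousOn h (Icc a b)) (hh0 : ∀ t ∈ Icc a b, 0 ≤ h t)
    (bound : ∀ t ∈ Ico a b, ⟪u' t, u t⟫ ≤ h t * ‖u t‖) :
    ∀ r ∈ Icc a b, ‖u r‖ ≤ ‖u a‖ + ∫ v in a..r, h v := by
  -- The comparison principle needs strict inequality at contact points, hence the slack `δ`;
  -- squares are compared because `‖u‖` need not be differentiable where `u` vanishes.
  have hfence : ∀ δ > 0, ∀ r ∈ Icc a b,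
      ‖u r‖ ≤ ‖u a‖ + (∫ v in a..r, h v) + δ * (1 + (r - a)) := by
    intro δ hδ
    set ρ : ℝ → ℝ := fun s => ‖u a‖ + (∫ v in a..s, h v) + δ * (1 + (s - a)) with hρ
    have hρ_pos : ∀ s ∈ Icc a b, 0 < ρ s := fun s hs => by
      have : 0 ≤ ∫ v in a..s, h v :=
        intervalIntegral.integral_nonneg hs.1 fun v hv => hh0 v ⟨hv.1, hv.2.trans hs.2⟩
      have : 0 ≤ s - a := sub_nonneg.2 hs.1
      positivity
    have hρ_cont : ContinuousOn ρ (Icc a b) :=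
      (continuousOn_const.add (continuousOn_integral_Icc hh)).add (by fun_prop)
    have hρ_deriv : ∀ t ∈ Ico a b, HasDerivWithinAt ρ (h t + δ) (Ici t) t := fun t ht => by
      have hlin : HasDerivWithinAt (fun s : ℝ => δ * (1 + (s - a))) δ (Ici t) t := by
        simpa using (((hasDerivWithinAt_id t _).sub_const a).const_add 1).const_mul δ
      exact ((hasDerivWithinAt_integral_Ici hh ht).const_add _).add hlin
    have hsq : ∀ s ∈ Icc a b, ‖u s‖ ^ 2 ≤ ρ s ^ 2 := by
      refine image_le_of_deriv_right_lt_deriv_boundary' (f := fun s => ‖u s‖ ^ 2)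
        (B := fun s => ρ s ^ 2) (B' := fun t => 2 * ρ t * (h t + δ)) (hu.norm.pow 2)
        (fun t ht => (hu' t ht).norm_sq) ?_ (hρ_cont.pow 2)
        (fun t ht => by simpa using (hρ_deriv t ht).fun_pow 2) ?_
      · have : 0 ≤ ‖u a‖ := norm_nonneg _
        simp only [hρ, intervalIntegral.integral_same, sub_self]
        nlinarith
      · intro t ht heq
        have hpos := hρ_pos t (Ico_subset_Icc_self ht)
        have hnorm : ‖u t‖ = ρ t := (pow_left_inj₀ (norm_nonneg _) hpos.le two_ne_zero).1 heq
        have := bound t ht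
        rw [real_inner_comm, hnorm] at this
        nlinarith
    intro r hr
    exact (pow_le_pow_iff_left₀ (norm_nonneg _) (hρ_pos r hr).le two_ne_zero).1 (hsq r hr)
  intro r hr
  have hlen : 0 < 1 + (r - a) := by linarith [hr.1]
  refine le_of_forall_pos_le_add fun η hη => ?_
  simpa [div_mul_cancel₀ η hlen.ne'] using hfence (η / (1 + (r - a))) (by positivity) r hr

theorem norm_le_exp_mul_add_integral_of_inner_deriv_le {z z' : ℝ → E} {f : ℝ → ℝ} {a b c : ℝ}
    (hz : ContinuousOn z (Icc a b)) (hz' : ∀ t ∈ Ico a b, HasDerivWithinAt z (z' t) (Ici t) t)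
    (hf : ContinuousOn f (Icc a b)) (hf0 : ∀ t ∈ Icc a b, 0 ≤ f t)
    (bound : ∀ t ∈ Ico a b, ⟪z' t, z t⟫ ≤ -c * ‖z t‖ ^ 2 + f t * ‖z t‖) :
    ∀ r ∈ Icc a b,
      ‖z r‖ ≤ Real.exp (-c * (r - a)) * ‖z a‖ + ∫ v in a..r, Real.exp (-c * (r - v)) * f v := by
  set e : ℝ → ℝ := fun t => Real.exp (c * (t - a)) with he
  have he_pos : ∀ t, 0 < e t := fun t => Real.exp_pos _
  have he_deriv : ∀ t, HasDerivAt e (c * e t) t := fun t => by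
    simpa [he, mul_comm] using (((hasDerivAt_id t).sub_const a).const_mul c).exp
  have he_cont : Continuous e := by fun_prop
  have hweighted := norm_le_add_integral_of_inner_deriv_le (u := fun t => e t • z t)
    (u' := fun t => e t • z' t + (c * e t) • z t) (h := fun t => e t * f t)
    (he_cont.continuousOn.smul hz)
    (fun t ht => by simpa [add_comm] using (he_deriv t).hasDerivWithinAt.fun_smul (hz' t ht))
    (he_cont.continuousOn.mul hf) (fun t ht => mul_nonneg (he_pos t).le (hf0 t ht))
    (fun t ht => by
      simp only [inner_add_left, real_inner_smul_left, real_inner_smul_right,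
        real_inner_self_eq_norm_sq, norm_smul, Real.norm_of_nonneg (he_pos t).le]
      calc e t * (e t * ⟪z' t, z t⟫) + e t * (c * e t * ‖z t‖ ^ 2)
          = e t ^ 2 * (⟪z' t, z t⟫ + c * ‖z t‖ ^ 2) := by ring
        _ ≤ e t ^ 2 * (f t * ‖z t‖) := by gcongr; linarith [bound t ht]
        _ = e t * f t * (e t * ‖z t‖) := by ring)
  intro r hr
  have hunweight : ∀ v, Real.exp (-c * (r - a)) * e v = Real.exp (-c * (r - v)) := fun v => by
    rw [he, ← Real.exp_add]; ring_nf
  calc ‖z r‖ = Real.exp (-c * (r - a)) * ‖e r • z r‖ := by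
        rw [norm_smul, Real.norm_of_nonneg (he_pos r).le, ← mul_assoc, hunweight, sub_self,
          mul_zero, Real.exp_zero, one_mul]
    _ ≤ Real.exp (-c * (r - a)) * (‖e a • z a‖ + ∫ v in a..r, e v * f v) := by
        gcongr; exact hweighted r hr
    _ = _ := by
        have he_a : e a = 1 := by simp [he]
        simp only [he_a, one_smul, mul_add, ← intervalIntegral.integral_const_mul, ← mul_assoc,
          hunweight]

end

theorem inner_neg_map_add_sub_le {E X : Type*} [NormedAddCommGroup E] [InnerProductSpace ℝ E]
    [SeminormedAddCommGroup X] {T : E →ₗ[ℝ] E} {lam L : ℝ}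
    (hT : ∀ y, lam * ‖y‖ ^ 2 ≤ ⟪T y, y⟫) {g : X → E → E}
    (hg : ∀ x₁ x₂ y₁ y₂, ‖g x₁ y₁ - g x₂ y₂‖ ≤ L * (‖x₁ - x₂‖ + ‖y₁ - y₂‖))
    (x₁ x₂ : X) (y₁ y₂ : E) :
    ⟪(-T y₁ + g x₁ y₁) - (-T y₂ + g x₂ y₂), y₁ - y₂⟫
      ≤ -(lam - L) * ‖y₁ - y₂‖ ^ 2 + L * ‖x₁ - x₂‖ * ‖y₁ - y₂‖ := by
  have hsplit : (-T y₁ + g x₁ y₁) - (-T y₂ + g x₂ y₂) = -T (y₁ - y₂) + (g x₁ y₁ - g x₂ y₂) := by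
    rw [map_sub]; abel
  have hcoercive := hT (y₁ - y₂)
  have hlip : ⟪g x₁ y₁ - g x₂ y₂, y₁ - y₂⟫ ≤ L * (‖x₁ - x₂‖ + ‖y₁ - y₂‖) * ‖y₁ - y₂‖ :=
    (real_inner_le_norm _ _).trans (mul_le_mul_of_nonneg_right (hg _ _ _ _) (norm_nonneg _))
  rw [hsplit, inner_add_left, inner_neg_left]
  linarith

theorem continuousOn_neg_map_add {E X : Type*} [NormedAddCommGroup E] [NormedSpace ℝ E]
    [FiniteDimensional ℝ E] [TopologicalSpace X] {T : E →ₗ[ℝ] E} {g : X → E → E}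
    (hg : Continuous (Function.uncurry g)) {x : ℝ → X} {y : ℝ → E} {s : Set ℝ}
    (hx : ContinuousOn x s) (hy : ContinuousOn y s) :
    ContinuousOn (fun v => -T (y v) + g (x v) (y v)) s :=
  (T.continuous_of_finiteDimensional.comp_continuousOn hy).neg.add
    (hg.comp_continuousOn (hx.prodMk hy))

theorem auxiliary_process_estimate_general {n m : ℕ} (A : Matrix (Fin m) (Fin m) ℝ) (lamA L : ℝ)
    (hA : ∀ y : EuclideanSpace ℝ (Fin m), lamA * ‖y‖ ^ 2 ≤ ⟪Matrix.toEuclideanLin A y, y⟫)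
    (g : EuclideanSpace ℝ (Fin n) → EuclideanSpace ℝ (Fin m) → EuclideanSpace ℝ (Fin m))
    (hg : ∀ x₁ x₂ y₁ y₂, ‖g x₁ y₁ - g x₂ y₂‖ ≤ L * (‖x₁ - x₂‖ + ‖y₁ - y₂‖))
    (ε : ℝ) (hε : 0 < ε)
    (ω : ℝ → EuclideanSpace ℝ (Fin m))
    (a b : ℝ)
    (X : ℝ → EuclideanSpace ℝ (Fin n)) (hXc : ContinuousOn X (Set.Icc a b))
    (Y Yh : ℝ → EuclideanSpace ℝ (Fin m))
    (hYc : ContinuousOn Y (Set.Icc a b)) (hYhc : ContinuousOn Yh (Set.Icc a b))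
    (hY : ∀ t ∈ Set.Icc a b, Y t = Y a
      + ε⁻¹ • (∫ v in a..t, (-(Matrix.toEuclideanLin A (Y v)) + g (X v) (Y v)))
      + (ω (t / ε) - ω (a / ε)))
    (hYh : ∀ t ∈ Set.Icc a b, Yh t = Yh a
      + ε⁻¹ • (∫ v in a..t, (-(Matrix.toEuclideanLin A (Yh v)) + g (X a) (Yh v)))
      + (ω (t / ε) - ω (a / ε))) :
    ∀ r ∈ Set.Icc a b,
      ‖Y r - Yh r‖ ≤ Real.exp (-(lamA - L) * (r - a) / ε) * ‖Y a - Yh a‖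
        + (L / ε) * ∫ v in a..r, Real.exp (-(lamA - L) * (r - v) / ε) * ‖X v - X a‖ := by
  have hgc : Continuous (Function.uncurry g) := continuous_uncurry_of_norm_sub_le hg
  have hdrift := continuousOn_neg_map_add (T := Matrix.toEuclideanLin A) hgc hXc hYc
  have hdrift_h := continuousOn_neg_map_add (T := Matrix.toEuclideanLin A) hgc
    (continuousOn_const (c := X a)) hYhc
  have hZ := sub_eq_add_integral_of_eq_add_integral (n := fun t => ω (t / ε) - ω (a / ε))
    hdrift hdrift_h hY hYh
  have hforcing : ∀ t, 0 ≤ L / ε * ‖X t - X a‖ := fun t => by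
    rw [div_mul_eq_mul_div]
    exact div_nonneg (by simpa using (norm_nonneg _).trans (hg (X t) (X a) 0 0)) hε.le
  intro r hr
  have hest := norm_le_exp_mul_add_integral_of_inner_deriv_le (c := (lamA - L) / ε)
    (f := fun t => L / ε * ‖X t - X a‖) (hYc.fun_sub hYhc)
    (fun t ht => hasDerivWithinAt_Ici_of_eq_add_integral
      ((hdrift.fun_sub hdrift_h).fun_const_smul ε⁻¹) hZ ht)
    (continuousOn_const.mul (hXc.fun_sub continuousOn_const).norm) (fun t _ => hforcing t)
    (fun t _ => calc
      _ = ε⁻¹ * ⟪_, Y t - Yh t⟫ := real_inner_smul_left _ _ _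
      _ ≤ ε⁻¹ * (-(lamA - L) * ‖Y t - Yh t‖ ^ 2 + L * ‖X t - X a‖ * ‖Y t - Yh t‖) := by
        gcongr; exact inner_neg_map_add_sub_le hA hg _ _ _ _
      _ = _ := by ring) r hr
  have hexp : ∀ s, -((lamA - L) / ε) * s = -(lamA - L) * s / ε := fun s => by ring
  simp only [hexp] at hest
  refine hest.trans_eq ?_
  rw [← intervalIntegral.integral_const_mul]
  exact congrArg _ (intervalIntegral.integral_congr fun v _ => by ring)

theorem auxiliary_process_estimate {n m : ℕ} (A : Matrix (Fin m) (Fin m) ℝ) (lamA L : ℝ)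
    (hlam : 0 < lamA) (hLlam : L < lamA)
    (hA : ∀ y : EuclideanSpace ℝ (Fin m), lamA * ‖y‖ ^ 2 ≤ ⟪Matrix.toEuclideanLin A y, y⟫)
    (g : EuclideanSpace ℝ (Fin n) → EuclideanSpace ℝ (Fin m) → EuclideanSpace ℝ (Fin m))
    (hg : ∀ x₁ x₂ y₁ y₂, ‖g x₁ y₁ - g x₂ y₂‖ ≤ L * (‖x₁ - x₂‖ + ‖y₁ - y₂‖))
    (ε : ℝ) (hε : 0 < ε)
    (ω : ℝ → EuclideanSpace ℝ (Fin m)) (hω : Continuous ω)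
    (a b : ℝ) (hab : a ≤ b)
    (X : ℝ → EuclideanSpace ℝ (Fin n)) (hXc : ContinuousOn X (Set.Icc a b))
    (Y Yh : ℝ → EuclideanSpace ℝ (Fin m))
    (hYc : ContinuousOn Y (Set.Icc a b)) (hYhc : ContinuousOn Yh (Set.Icc a b))
    (hY : ∀ t ∈ Set.Icc a b, Y t = Y a
      + ε⁻¹ • (∫ v in a..t, (-(Matrix.toEuclideanLin A (Y v)) + g (X v) (Y v)))
      + (ω (t / ε) - ω (a / ε)))
    (hYh : ∀ t ∈ Set.Icc a b, Yh t = Yh a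
      + ε⁻¹ • (∫ v in a..t, (-(Matrix.toEuclideanLin A (Yh v)) + g (X a) (Yh v)))
      + (ω (t / ε) - ω (a / ε))) :
    ∀ r ∈ Set.Icc a b,
      ‖Y r - Yh r‖ ≤ Real.exp (-(lamA - L) * (r - a) / ε) * ‖Y a - Yh a‖
        + (L / ε) * ∫ v in a..r, Real.exp (-(lamA - L) * (r - v) / ε) * ‖X v - X a‖ :=
  auxiliary_process_estimate_general A lamA L hA g hg ε hε ω a b X hXc Y Yh hYc hYhc hY hYh
end

section
/- Let σ : ℝ^n → ℝ^m be twice continuously differentiable with ‖Dσ(x)‖ ≤ K and ‖D²σ(x)‖ ≤ K for all x ∈ ℝ^n. Then for all u_1, v_1, u_2, v_2 ∈ ℝ^n: ‖σ(u_1) − σ(v_1) − σ(u_2) + σ(v_2)‖ ≤ K ‖u_1 − v_1 − u_2 + v_2‖ + K ‖u_1 − u_2‖ (‖u_1 − v_1‖ + ‖u_2 − v_2‖). -/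
/-! With `p t = lineMap u₂ u₁ t` and `q t = lineMap v₂ v₁ t`, the difference `g t = σ (p t) - σ (q t)`
has derivative `Dσ(p)(u₁ - u₂) - Dσ(q)(v₁ - v₂)`.
Splitting this as `(Dσ(p) - Dσ(q))(u₁ - u₂) + Dσ(q)(u₁ - v₁ - u₂ + v₂)`, the second term is bounded
by `‖Dσ‖ ≤ K` and the first by the Lipschitz bound on `Dσ` coming from `‖D²σ‖ ≤ K`, since
`‖p - q‖ ≤ ‖u₁ - v₁‖ + ‖u₂ - v₂‖`. The mean value inequality for `g` on `[0, 1]` concludes. -/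

open Set AffineMap NNReal

variable {E F : Type*} [NormedAddCommGroup E] [NormedSpace ℝ E]
  [NormedAddCommGroup F] [NormedSpace ℝ F]

theorem ContinuousLinearMap.norm_apply_sub_apply_le (A B : E →L[ℝ] F) (x y : E) :
    ‖A x - B y‖ ≤ ‖A - B‖ * ‖x‖ + ‖B‖ * ‖x - y‖ := by
  calc ‖A x - B y‖ = ‖(A - B) x + B (x - y)‖ := by
        rw [sub_apply, map_sub]; abel_nf
    _ ≤ ‖A - B‖ * ‖x‖ + ‖B‖ * ‖x - y‖ := norm_add_le_of_le (le_opNorm _ _) (le_opNorm _ _)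

theorem norm_lineMap_sub_lineMap_le (a b c d : E) {s : ℝ} (hs : s ∈ Icc (0 : ℝ) 1) :
    ‖lineMap a b s - lineMap c d s‖ ≤ ‖a - c‖ + ‖b - d‖ := by
  rw [← vsub_eq_sub, lineMap_vsub_lineMap, vsub_eq_sub, vsub_eq_sub, lineMap_apply_module]
  obtain ⟨hs₀, hs₁⟩ := hs
  calc ‖(1 - s) • (a - c) + s • (b - d)‖ ≤ (1 - s) * ‖a - c‖ + s * ‖b - d‖ := by
        refine norm_add_le_of_le ?_ ?_ <;>
          rw [norm_smul, Real.norm_of_nonneg (by linarith)]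
    _ ≤ ‖a - c‖ + ‖b - d‖ := by nlinarith [norm_nonneg (a - c), norm_nonneg (b - d)]

theorem norm_sub_sub_sub_add_le_of_lipschitzWith_fderiv {f : E → F} {K : ℝ} {L : ℝ≥0}
    (hf : Differentiable ℝ f) (hDf : ∀ x, ‖fderiv ℝ f x‖ ≤ K)
    (hLip : LipschitzWith L (fderiv ℝ f)) (u₁ v₁ u₂ v₂ : E) :
    ‖f u₁ - f v₁ - f u₂ + f v₂‖ ≤
      K * ‖u₁ - v₁ - u₂ + v₂‖ + L * ‖u₁ - u₂‖ * (‖u₁ - v₁‖ + ‖u₂ - v₂‖) := by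
  set g : ℝ → F := fun t ↦ f (lineMap u₂ u₁ t) - f (lineMap v₂ v₁ t)
  have hg : ∀ t, HasDerivAt g
      (fderiv ℝ f (lineMap u₂ u₁ t) (u₁ - u₂) - fderiv ℝ f (lineMap v₂ v₁ t) (v₁ - v₂)) t :=
    fun t ↦ ((hf _).hasFDerivAt.comp_hasDerivAt t hasDerivAt_lineMap).sub
      ((hf _).hasFDerivAt.comp_hasDerivAt t hasDerivAt_lineMap)
  have hg' : ∀ t ∈ Ico (0 : ℝ) 1,
      ‖fderiv ℝ f (lineMap u₂ u₁ t) (u₁ - u₂) - fderiv ℝ f (lineMap v₂ v₁ t) (v₁ - v₂)‖ ≤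
        K * ‖u₁ - v₁ - u₂ + v₂‖ + L * ‖u₁ - u₂‖ * (‖u₁ - v₁‖ + ‖u₂ - v₂‖) := by
    intro t ht
    have hpq := norm_lineMap_sub_lineMap_le u₂ u₁ v₂ v₁ (Ico_subset_Icc_self ht)
    calc _ ≤ ‖fderiv ℝ f (lineMap u₂ u₁ t) - fderiv ℝ f (lineMap v₂ v₁ t)‖ * ‖u₁ - u₂‖ +
            ‖fderiv ℝ f (lineMap v₂ v₁ t)‖ * ‖u₁ - u₂ - (v₁ - v₂)‖ :=
          ContinuousLinearMap.norm_apply_sub_apply_le _ _ _ _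
      _ ≤ L * (‖u₂ - v₂‖ + ‖u₁ - v₁‖) * ‖u₁ - u₂‖ + K * ‖u₁ - v₁ - u₂ + v₂‖ := by
          rw [show u₁ - u₂ - (v₁ - v₂) = u₁ - v₁ - u₂ + v₂ by abel]
          gcongr
          · exact (hLip.norm_sub_le _ _).trans (by gcongr)
          · exact hDf _
      _ = _ := by ring
  have hmvt := norm_image_sub_le_of_norm_deriv_le_segment_01'
    (fun t _ ↦ (hg t).hasDerivWithinAt) hg'
  simp only [g, lineMap_apply_one, lineMap_apply_zero] at hmvt
  rwa [← sub_add] at hmvt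

theorem second_order_increment_bound {n m : ℕ}
    (σ : EuclideanSpace ℝ (Fin n) → EuclideanSpace ℝ (Fin m)) (K : ℝ)
    (hσ : ContDiff ℝ 2 σ)
    (hD1 : ∀ x, ‖fderiv ℝ σ x‖ ≤ K)
    (hD2 : ∀ x, ‖fderiv ℝ (fderiv ℝ σ) x‖ ≤ K) :
    ∀ u₁ v₁ u₂ v₂ : EuclideanSpace ℝ (Fin n),
      ‖σ u₁ - σ v₁ - σ u₂ + σ v₂‖ ≤
        K * ‖u₁ - v₁ - u₂ + v₂‖ + K * ‖u₁ - u₂‖ * (‖u₁ - v₁‖ + ‖u₂ - v₂‖) := by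
  have hK : 0 ≤ K := (norm_nonneg _).trans (hD1 0)
  have hDσ : Differentiable ℝ (fderiv ℝ σ) :=
    (hσ.fderiv_right (m := 1) le_rfl).differentiable one_ne_zero
  have hLip : LipschitzWith K.toNNReal (fderiv ℝ σ) :=
    lipschitzWith_of_nnnorm_fderiv_le hDσ fun x ↦ by
      rw [← NNReal.coe_le_coe, coe_nnnorm, Real.coe_toNNReal K hK]; exact hD2 x
  intro u₁ v₁ u₂ v₂
  simpa only [Real.coe_toNNReal K hK] using
    norm_sub_sub_sub_add_le_of_lipschitzWith_fderiv (hσ.differentiable two_ne_zero) hD1 hLip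
      u₁ v₁ u₂ v₂
end
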